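/- arXiv:2003.02147 — 9 statements merged into one kernel-verified Lean document; each statement's English description precedes it below -/
import Mathlib

section
/- Let M be a compact metric space and φ : ℝ × M → M a continuous flow (φ(0,x) = x, φ(t+s,x) = φ(t, φ(s,x))). Let T > 0 and let μ be a finite Borel measure on M with full support such that, for some c ≥ 1, c^{-1} μ(A) ≤ μ(φ(t,·)(A)) ≤ c μ(A) for every Borel set A ⊆ M and every t ∈ [−T, T]. Let χ : M → ℝ be continuous. For u₀ ∈ L²(M, μ) define u(t,x) = u₀(φ(t,x)). Then the following are equivalent: (i) there exists C₀ > 0 such that ∫₀^T ∫_M χ(x)² u(t,x)² dμ(x) dt ≥ C₀ ∫_M u₀² dμ for every u₀ ∈ L²(M, μ); (ii) for every x ∈ M there exists t ∈ (0,T) with χ(φ(−t,x)) ≠ 0. -/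
/-!
Write `φₜ = φ (t, ·)`. Quasi-invariance makes the push-forwards `φₜ₊ μ`, `t ∈ [0, T]`, comparable
to `μ`, so the observation `∫₀ᵀ ∫ χ² (u₀ ∘ φₜ)² dμ dt` is comparable to `∫ G u₀² dμ`, where
`G y = ∫₀ᵀ χ (φ (-t, y))² dt`. Under the Geometric Control Condition `G` is continuous and positive
on the compact space `M`, hence bounded below by some `δ > 0`, which gives observability with
constant `δ / c`.

Conversely, if `χ` vanishes on the backward orbit `φ (-t, x₀)`, `t ∈ [0, T]`, compactness of
`[0, T] × {χ² ≥ ε}` yields an open `U ∋ x₀` with `χ² < ε` on every `φₜ⁻¹ U`. Testing with the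
indicator of `U`, which has positive measure by full support, gives `C₀ μ U ≤ T c ε μ U`, which
fails for small `ε`.
-/

open MeasureTheory Set Function
open scoped ENNReal NNReal

section Flow

variable {M : Type*} {φ : ℝ × M → M}

theorem flow_neg_apply_flow (hφ0 : ∀ x : M, φ (0, x) = x)
    (hφadd : ∀ (t s : ℝ) (x : M), φ (t + s, x) = φ (t, φ (s, x))) (t : ℝ) (x : M) :
    φ (-t, φ (t, x)) = x := by
  rw [← hφadd, neg_add_cancel, hφ0]

theorem preimage_flow_eq_image_flow_neg (hφ0 : ∀ x : M, φ (0, x) = x)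
    (hφadd : ∀ (t s : ℝ) (x : M), φ (t + s, x) = φ (t, φ (s, x))) (t : ℝ) (A : Set M) :
    (fun x => φ (t, x)) ⁻¹' A = (fun x => φ (-t, x)) '' A :=
  congrFun (image_eq_preimage_of_inverse (f := fun x => φ (-t, x)) (g := fun x => φ (t, x))
    (fun x => by simpa using flow_neg_apply_flow hφ0 hφadd (-t) x)
    (flow_neg_apply_flow hφ0 hφadd t)).symm A

end Flow

section PushForward

variable {M : Type*} [MeasurableSpace M] {μ : Measure M} {e : M → M} {a : ℝ≥0∞}

theorem mul_lintegral_le_lintegral_comp (h : a • μ ≤ μ.map e) (f : M → ℝ≥0∞) :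
    a * ∫⁻ x, f x ∂μ ≤ ∫⁻ x, f (e x) ∂μ :=
  calc a * ∫⁻ x, f x ∂μ = ∫⁻ x, f x ∂(a • μ) := (lintegral_smul_measure a f).symm
    _ ≤ ∫⁻ x, f x ∂(μ.map e) := lintegral_mono' h le_rfl
    _ ≤ ∫⁻ x, f (e x) ∂μ := lintegral_map_le f e

theorem lintegral_comp_le_mul_lintegral (he : Measurable e) (h : μ.map e ≤ a • μ)
    {f : M → ℝ≥0∞} (hf : Measurable f) :
    ∫⁻ x, f (e x) ∂μ ≤ a * ∫⁻ x, f x ∂μ := by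
  rw [← lintegral_map hf he, ← smul_eq_mul, ← lintegral_smul_measure]
  exact lintegral_mono' h le_rfl

theorem lintegral_mul_comp_le (he : Measurable e) (h : μ.map e ≤ a • μ) {w f : M → ℝ≥0∞}
    {C : ℝ≥0∞} (hw : ∀ x, w x ≤ C) (hf : Measurable f) :
    ∫⁻ x, w x * f (e x) ∂μ ≤ C * (a * ∫⁻ x, f x ∂μ) :=
  calc ∫⁻ x, w x * f (e x) ∂μ ≤ ∫⁻ x, C * f (e x) ∂μ := lintegral_mono fun x => by gcongr; exact hw x
    _ = C * ∫⁻ x, f (e x) ∂μ := lintegral_const_mul _ (hf.comp he)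
    _ ≤ C * (a * ∫⁻ x, f x ∂μ) := by gcongr; exact lintegral_comp_le_mul_lintegral he h hf

theorem integral_mul_indicator_comp_le [IsFiniteMeasure μ] {c : ℝ≥0} (he : Measurable e)
    (h : μ.map e ≤ (c : ℝ≥0∞) • μ) {U : Set M} (hU : MeasurableSet U) {f : M → ℝ} {ε : ℝ}
    (hε : 0 ≤ ε) (hf0 : ∀ x, 0 ≤ f x) (hf : ∀ x, e x ∈ U → f x ≤ ε) :
    ∫ x, f x * U.indicator 1 (e x) ∂μ ≤ ε * (c * μ.real U) := by
  have hind : (fun x => f x * U.indicator 1 (e x)) = (e ⁻¹' U).indicator f := by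
    ext x
    by_cases hx : e x ∈ U <;> simp [hx]
  have hpre : μ.real (e ⁻¹' U) ≤ c * μ.real U := by
    have hU' := h U
    rw [Measure.map_apply he hU, Measure.smul_apply, smul_eq_mul] at hU'
    simpa [measureReal_def] using ENNReal.toReal_mono (by finiteness) hU'
  rw [hind, integral_indicator (he hU)]
  calc ∫ x in e ⁻¹' U, f x ∂μ ≤ ε * μ.real (e ⁻¹' U) :=
        (le_abs_self _).trans <| norm_setIntegral_le_of_norm_le_const (measure_lt_top _ _)
          fun x hx => by rw [Real.norm_of_nonneg (hf0 x)]; exact hf x hx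
    _ ≤ ε * (c * μ.real U) := by
        gcongr

end PushForward

theorem IsCompact.exists_isOpen_forall_lt_of_forall_apply_eq {X M N : Type*} [TopologicalSpace X]
    [TopologicalSpace M] [CompactSpace M] [TopologicalSpace N] [T2Space N] {F : X × M → N}
    (hF : Continuous F) {h : M → ℝ} (hh : Continuous h) {K : Set X} (hK : IsCompact K) {y : N}
    {ε : ℝ} (hy : ∀ t ∈ K, ∀ x, F (t, x) = y → h x < ε) :
    ∃ U, IsOpen U ∧ y ∈ U ∧ ∀ t ∈ K, ∀ x, F (t, x) ∈ U → h x < ε := by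
  have hS : IsCompact (K ×ˢ {x | ε ≤ h x}) :=
    hK.prod (isClosed_le continuous_const hh).isCompact
  refine ⟨(F '' (K ×ˢ {x | ε ≤ h x}))ᶜ, (hS.image hF).isClosed.isOpen_compl, ?_, ?_⟩
  · rintro ⟨⟨t, x⟩, ⟨ht, hx⟩, hFy⟩
    exact (hy t ht x hFy).not_ge hx
  · intro t ht x hU
    by_contra! hx
    exact hU ⟨(t, x), ⟨ht, hx⟩, rfl⟩

theorem exists_pos_le_intervalIntegral {X : Type*} [TopologicalSpace X] [CompactSpace X]
    {f : X → ℝ → ℝ} (hf : Continuous (uncurry f)) {a b : ℝ} (hab : a < b)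
    (hf0 : ∀ x, ∀ t ∈ Ioc a b, 0 ≤ f x t) (hpos : ∀ x, ∃ t ∈ Icc a b, 0 < f x t) :
    ∃ δ > 0, ∀ x, δ ≤ ∫ t in a..b, f x t := by
  have hG : Continuous fun x => ∫ t in a..b, f x t :=
    intervalIntegral.continuous_parametric_intervalIntegral_of_continuous hf continuous_const
  obtain ⟨δ, hδ, hδG⟩ := isCompact_univ.exists_forall_le' hG.continuousOn fun x _ =>
    intervalIntegral.integral_pos hab (hf.comp (Continuous.prodMk_right x)).continuousOn
      (hf0 x) (hpos x)
  exact ⟨δ, hδ, fun x => hδG x (mem_univ x)⟩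

section Lintegral

variable {M : Type*} [MeasurableSpace M] {μ : Measure M}

theorem ofReal_intervalIntegral_integral_eq_lintegral [SFinite μ] {F : ℝ → M → ℝ}
    (hF : Measurable (uncurry F)) (hF0 : ∀ t x, 0 ≤ F t x) {a b : ℝ} (hab : a ≤ b) {B : ℝ≥0∞}
    (hB : B ≠ ∞) (hFB : ∀ t ∈ Ioc a b, ∫⁻ x, ENNReal.ofReal (F t x) ∂μ ≤ B) :
    ENNReal.ofReal (∫ t in a..b, ∫ x, F t x ∂μ) =
      ∫⁻ t in Ioc a b, ∫⁻ x, ENNReal.ofReal (F t x) ∂μ := by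
  have hΦ : Measurable fun t => ∫⁻ x, ENNReal.ofReal (F t x) ∂μ :=
    (ENNReal.measurable_ofReal.comp hF).lintegral_prod_right'
  have hfin : ∫⁻ t in Ioc a b, ∫⁻ x, ENNReal.ofReal (F t x) ∂μ ≠ ∞ := by
    refine ne_top_of_le_ne_top ?_ (setLIntegral_mono measurable_const hFB)
    rw [setLIntegral_const, Real.volume_Ioc]
    finiteness
  have hinner : ∀ t, ∫ x, F t x ∂μ = (∫⁻ x, ENNReal.ofReal (F t x) ∂μ).toReal := fun t =>
    integral_eq_lintegral_of_nonneg_ae (ae_of_all _ (hF0 t))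
      (hF.comp measurable_prodMk_left).aestronglyMeasurable
  simp_rw [intervalIntegral.integral_of_le hab, hinner]
  rw [integral_toReal hΦ.aemeasurable, ENNReal.ofReal_toReal hfin]
  exact (ae_restrict_iff' measurableSet_Ioc).2 (ae_of_all _ fun t ht =>
    (hFB t ht).trans_lt hB.lt_top)

end Lintegral

section Observability

variable {M : Type*} [TopologicalSpace M] [MeasurableSpace M] [BorelSpace M]
  {φ : ℝ × M → M} {μ : Measure M}

theorem mul_lintegral_le_setLIntegral_lintegral_flow [SFinite μ] (hφc : Continuous φ)
    (hφ0 : ∀ x : M, φ (0, x) = x)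
    (hφadd : ∀ (t s : ℝ) (x : M), φ (t + s, x) = φ (t, φ (s, x))) {s : Set ℝ} {a : ℝ≥0∞}
    (hle : ∀ t ∈ s, a • μ ≤ μ.map (fun x => φ (t, x))) {w f : M → ℝ≥0∞} (hw : Measurable w)
    (hf : Measurable f) :
    a * ∫⁻ y, (∫⁻ t in s, w (φ (-t, y))) * f y ∂μ ≤
      ∫⁻ t in s, ∫⁻ x, w x * f (φ (t, x)) ∂μ := by
  have hwφ : Measurable fun p : ℝ × M => w (φ (-p.1, p.2)) := by fun_prop
  have hm : Measurable fun p : ℝ × M => w (φ (-p.1, p.2)) * f p.2 := by fun_prop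
  calc a * ∫⁻ y, (∫⁻ t in s, w (φ (-t, y))) * f y ∂μ
      = a * ∫⁻ y, (∫⁻ t in s, w (φ (-t, y)) * f y) ∂μ := by
        congr 1
        exact lintegral_congr fun y =>
          (lintegral_mul_const _ (hwφ.comp measurable_prodMk_right)).symm
    _ = a * ∫⁻ t in s, ∫⁻ y, w (φ (-t, y)) * f y ∂μ := by
        have hm' : Measurable (uncurry fun y t => w (φ (-t, y)) * f y) := hm.comp measurable_swap
        rw [lintegral_lintegral_swap hm'.aemeasurable]
    _ = ∫⁻ t in s, a * ∫⁻ y, w (φ (-t, y)) * f y ∂μ :=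
        (lintegral_const_mul a hm.lintegral_prod_right').symm
    _ ≤ ∫⁻ t in s, ∫⁻ x, w x * f (φ (t, x)) ∂μ := by
        refine setLIntegral_mono ?_ fun t ht => ?_
        · exact (show Measurable fun p : ℝ × M => w p.2 * f (φ p) by fun_prop).lintegral_prod_right'
        · simpa only [flow_neg_apply_flow hφ0 hφadd] using
            mul_lintegral_le_lintegral_comp (hle t ht) fun y => w (φ (-t, y)) * f y

theorem le_intervalIntegral_observation_of_measurable [CompactSpace M] [IsFiniteMeasure μ]
    (hφc : Continuous φ) (hφ0 : ∀ x : M, φ (0, x) = x)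
    (hφadd : ∀ (t s : ℝ) (x : M), φ (t + s, x) = φ (t, φ (s, x))) {T : ℝ} (hT : 0 < T)
    {c : ℝ≥0} (hle : ∀ t ∈ Icc 0 T, (c : ℝ≥0∞)⁻¹ • μ ≤ μ.map (fun x => φ (t, x)))
    (hge : ∀ t ∈ Icc 0 T, μ.map (fun x => φ (t, x)) ≤ (c : ℝ≥0∞) • μ)
    {χ : M → ℝ} (hχ : Continuous χ) {δ : ℝ} (hδ : 0 ≤ δ)
    (hδχ : ∀ y, δ ≤ ∫ t in (0:ℝ)..T, χ (φ (-t, y)) ^ 2) {g : M → ℝ} (hg : Measurable g)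
    (hg2 : MemLp g 2 μ) :
    δ / c * ∫ x, g x ^ 2 ∂μ ≤ ∫ t in (0:ℝ)..T, ∫ x, χ x ^ 2 * g (φ (t, x)) ^ 2 ∂μ := by
  set w : M → ℝ≥0∞ := fun x => ENNReal.ofReal (χ x ^ 2)
  set f : M → ℝ≥0∞ := fun y => ENNReal.ofReal (g y ^ 2)
  have hw : Measurable w := by fun_prop
  have hf : Measurable f := by fun_prop
  have hsplit : ∀ t x, ENNReal.ofReal (χ x ^ 2 * g (φ (t, x)) ^ 2) = w x * f (φ (t, x)) :=
    fun _ _ => ENNReal.ofReal_mul (sq_nonneg _)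
  have hE : ENNReal.ofReal (∫ x, g x ^ 2 ∂μ) = ∫⁻ x, f x ∂μ :=
    ofReal_integral_eq_lintegral_ofReal hg2.integrable_sq (ae_of_all _ fun _ => sq_nonneg _)
  obtain ⟨C, hC⟩ := (isCompact_range (hχ.pow 2)).bddAbove
  -- The upper bound only makes the observation finite, so that it can be computed in `ℝ≥0∞`.
  have hconv := ofReal_intervalIntegral_integral_eq_lintegral (μ := μ)
    (F := fun t x => χ x ^ 2 * g (φ (t, x)) ^ 2) (by fun_prop) (fun _ _ => by positivity) hT.le
    (B := ENNReal.ofReal C * (c * ∫⁻ x, f x ∂μ)) (by rw [← hE]; finiteness) fun t ht => by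
      simp_rw [hsplit]
      exact lintegral_mul_comp_le (by fun_prop) (hge t (Ioc_subset_Icc_self ht))
        (fun x => ENNReal.ofReal_le_ofReal (hC ⟨x, rfl⟩)) hf
  have hG : ∀ y, ENNReal.ofReal δ ≤ ∫⁻ t in Ioc 0 T, w (φ (-t, y)) := by
    intro y
    have hcont : Continuous fun t => χ (φ (-t, y)) ^ 2 := by fun_prop
    rw [← ofReal_integral_eq_lintegral_ofReal hcont.integrableOn_Ioc
      (ae_of_all _ fun _ => sq_nonneg _), ← intervalIntegral.integral_of_le hT.le]
    exact ENNReal.ofReal_le_ofReal (hδχ y)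
  have hlower : (c : ℝ≥0∞)⁻¹ * (ENNReal.ofReal δ * ∫⁻ x, f x ∂μ) ≤
      ENNReal.ofReal (∫ t in (0:ℝ)..T, ∫ x, χ x ^ 2 * g (φ (t, x)) ^ 2 ∂μ) := by
    rw [hconv]
    simp_rw [hsplit]
    calc (c : ℝ≥0∞)⁻¹ * (ENNReal.ofReal δ * ∫⁻ x, f x ∂μ)
        = (c : ℝ≥0∞)⁻¹ * ∫⁻ y, ENNReal.ofReal δ * f y ∂μ := by rw [lintegral_const_mul _ hf]
      _ ≤ (c : ℝ≥0∞)⁻¹ * ∫⁻ y, (∫⁻ t in Ioc 0 T, w (φ (-t, y))) * f y ∂μ := by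
          gcongr with y
          exact hG y
      _ ≤ _ := mul_lintegral_le_setLIntegral_lintegral_flow hφc hφ0 hφadd
          (fun t ht => hle t (Ioc_subset_Icc_self ht)) hw hf
  have hobs := ENNReal.toReal_le_of_le_ofReal (intervalIntegral.integral_nonneg hT.le
    fun _ _ => integral_nonneg fun _ => by positivity) hlower
  rw [← hE] at hobs
  have hE0 : 0 ≤ ∫ x, g x ^ 2 ∂μ := integral_nonneg fun x => sq_nonneg (g x)
  simpa [ENNReal.toReal_mul, hδ, hE0, div_eq_inv_mul, mul_assoc] using hobs

theorem observable_of_forall_exists_flow_ne_zero [CompactSpace M] [IsFiniteMeasure μ]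
    (hφc : Continuous φ) (hφ0 : ∀ x : M, φ (0, x) = x)
    (hφadd : ∀ (t s : ℝ) (x : M), φ (t + s, x) = φ (t, φ (s, x))) {T : ℝ} (hT : 0 < T)
    {c : ℝ≥0} (hc : 0 < c) (hle : ∀ t ∈ Icc 0 T, (c : ℝ≥0∞)⁻¹ • μ ≤ μ.map (fun x => φ (t, x)))
    (hge : ∀ t ∈ Icc 0 T, μ.map (fun x => φ (t, x)) ≤ (c : ℝ≥0∞) • μ)
    {χ : M → ℝ} (hχ : Continuous χ) (hgcc : ∀ x : M, ∃ t ∈ Ioo (0:ℝ) T, χ (φ (-t, x)) ≠ 0) :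
    ∃ C₀ > 0, ∀ u₀ : M → ℝ, MemLp u₀ 2 μ →
      C₀ * ∫ x, (u₀ x) ^ 2 ∂μ ≤ ∫ t in (0:ℝ)..T, ∫ x, (χ x) ^ 2 * (u₀ (φ (t, x))) ^ 2 ∂μ := by
  obtain ⟨δ, hδ, hδχ⟩ := exists_pos_le_intervalIntegral (f := fun y t => χ (φ (-t, y)) ^ 2)
    (by fun_prop) hT (fun _ _ _ => sq_nonneg _) fun y =>
      let ⟨t, ht, hχt⟩ := hgcc y
      ⟨t, Ioo_subset_Icc_self ht, by positivity⟩
  refine ⟨δ / c, by positivity, fun u₀ hu₀ => ?_⟩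
  obtain ⟨g, hg, hug⟩ := hu₀.aestronglyMeasurable
  have hcomp : ∀ t ∈ uIcc 0 T, ∫ x, χ x ^ 2 * u₀ (φ (t, x)) ^ 2 ∂μ =
      ∫ x, χ x ^ 2 * g (φ (t, x)) ^ 2 ∂μ := by
    intro t ht
    rw [uIcc_of_le hT.le] at ht
    refine integral_congr_ae ((ae_eq_comp' (by fun_prop)
      hug (Measure.absolutelyContinuous_of_le_smul (hge t ht))).mono fun x hx => ?_)
    simp only [comp_apply] at hx
    simp only [hx]
  have hnorm : ∫ x, u₀ x ^ 2 ∂μ = ∫ x, g x ^ 2 ∂μ :=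
    integral_congr_ae (hug.mono fun x hx => by simp only [hx])
  rw [hnorm, intervalIntegral.integral_congr hcomp]
  exact le_intervalIntegral_observation_of_measurable hφc hφ0 hφadd hT hle hge hχ hδ.le hδχ
    hg.measurable (hu₀.ae_eq hug)

theorem forall_exists_flow_ne_zero_of_observable [T2Space M] [CompactSpace M] [IsFiniteMeasure μ]
    (hφc : Continuous φ) (hφ0 : ∀ x : M, φ (0, x) = x)
    (hφadd : ∀ (t s : ℝ) (x : M), φ (t + s, x) = φ (t, φ (s, x))) {T : ℝ} (hT : 0 < T)
    (hsupp : ∀ U : Set M, IsOpen U → U.Nonempty → 0 < μ U) {c : ℝ≥0}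
    (hge : ∀ t ∈ Icc 0 T, μ.map (fun x => φ (t, x)) ≤ (c : ℝ≥0∞) • μ)
    {χ : M → ℝ} (hχ : Continuous χ)
    (hobs : ∃ C₀ > 0, ∀ u₀ : M → ℝ, MemLp u₀ 2 μ →
      C₀ * ∫ x, (u₀ x) ^ 2 ∂μ ≤ ∫ t in (0:ℝ)..T, ∫ x, (χ x) ^ 2 * (u₀ (φ (t, x))) ^ 2 ∂μ)
    (x₀ : M) : ∃ t ∈ Ioo (0:ℝ) T, χ (φ (-t, x₀)) ≠ 0 := by
  obtain ⟨C₀, hC₀, hobs⟩ := hobs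
  by_contra! hzero
  have hzero' : ∀ t ∈ Icc 0 T, χ (φ (-t, x₀)) = 0 := by
    rw [← closure_Ioo hT.ne]
    exact closure_minimal hzero (isClosed_eq (by fun_prop) continuous_const)
  obtain ⟨ε, hε, hεC⟩ := exists_pos_mul_lt hC₀ (T * c)
  obtain ⟨U, hUo, hx₀U, hU⟩ := isCompact_Icc.exists_isOpen_forall_lt_of_forall_apply_eq hφc
    (hχ.pow 2) (y := x₀) (ε := ε) fun t ht x hx => by
      have hχx := hzero' t ht
      rw [← hx, flow_neg_apply_flow hφ0 hφadd] at hχx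
      simpa [hχx] using hε
  have hUpos : 0 < μ.real U :=
    ENNReal.toReal_pos (hsupp U hUo ⟨x₀, hx₀U⟩).ne' (measure_ne_top _ _)
  have hsq : ∀ y, U.indicator (1 : M → ℝ) y ^ 2 = U.indicator 1 y := fun y => by
    by_cases hy : y ∈ U <;> simp [hy]
  have hobsU := hobs (U.indicator 1)
    (memLp_indicator_const 2 hUo.measurableSet 1 (Or.inr (measure_ne_top _ _)))
  simp only [hsq, integral_indicator_one hUo.measurableSet] at hobsU
  have hslice : ∀ t ∈ uIoc 0 T, ‖∫ x, χ x ^ 2 * U.indicator 1 (φ (t, x)) ∂μ‖ ≤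
      ε * (c * μ.real U) := by
    intro t ht
    rw [uIoc_of_le hT.le] at ht
    refine (Real.norm_of_nonneg (integral_nonneg fun x => ?_)).trans_le ?_
    · exact mul_nonneg (sq_nonneg _) (indicator_nonneg (fun _ _ => zero_le_one) _)
    exact integral_mul_indicator_comp_le (by fun_prop)
      (hge t (Ioc_subset_Icc_self ht)) hUo.measurableSet hε.le (fun x => sq_nonneg _)
      fun x hx => (hU t (Ioc_subset_Icc_self ht) x hx).le
  have hbound : ∫ t in (0:ℝ)..T, ∫ x, χ x ^ 2 * U.indicator 1 (φ (t, x)) ∂μ ≤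
      ε * (c * μ.real U) * T := by
    simpa [abs_of_pos hT] using
      (le_abs_self _).trans (intervalIntegral.norm_integral_le_of_norm_le_const hslice)
  nlinarith

end Observability

/-- Observability of the free transport equation along a continuous flow on a compact
metric space, with respect to a finite quasi-invariant measure of full support, is
equivalent to the Geometric Control Condition. -/
theorem stmt2 {M : Type*} [MetricSpace M] [CompactSpace M]
    [MeasurableSpace M] [BorelSpace M]
    (φ : ℝ × M → M) (hφc : Continuous φ)
    (hφ0 : ∀ x : M, φ (0, x) = x)
    (hφadd : ∀ (t s : ℝ) (x : M), φ (t + s, x) = φ (t, φ (s, x)))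
    (T : ℝ) (hT : 0 < T)
    (μ : Measure M) [IsFiniteMeasure μ]
    (hsupp : ∀ U : Set M, IsOpen U → U.Nonempty → 0 < μ U)
    (c : ℝ≥0) (hc : 1 ≤ c)
    (hqi : ∀ A : Set M, MeasurableSet A → ∀ t ∈ Set.Icc (-T) T,
      (c : ℝ≥0∞)⁻¹ * μ A ≤ μ ((fun x => φ (t, x)) '' A) ∧
      μ ((fun x => φ (t, x)) '' A) ≤ (c : ℝ≥0∞) * μ A)
    (χ : M → ℝ) (hχ : Continuous χ) :
    (∃ C₀ > 0, ∀ u₀ : M → ℝ, MemLp u₀ 2 μ →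
      C₀ * ∫ x, (u₀ x)^2 ∂μ ≤
        ∫ t in (0:ℝ)..T, ∫ x, (χ x)^2 * (u₀ (φ (t, x)))^2 ∂μ) ↔
    (∀ x : M, ∃ t ∈ Set.Ioo (0:ℝ) T, χ (φ (-t, x)) ≠ 0) := by
  have hmap : ∀ t ∈ Icc 0 T, ∀ A, MeasurableSet A →
      (c : ℝ≥0∞)⁻¹ * μ A ≤ μ.map (fun x => φ (t, x)) A ∧
        μ.map (fun x => φ (t, x)) A ≤ c * μ A := by
    intro t ht A hA
    rw [Measure.map_apply (by fun_prop) hA,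
      preimage_flow_eq_image_flow_neg hφ0 hφadd]
    exact hqi A hA (-t) ⟨by linarith [ht.2], by linarith [ht.1]⟩
  have hle : ∀ t ∈ Icc 0 T, (c : ℝ≥0∞)⁻¹ • μ ≤ μ.map (fun x => φ (t, x)) := fun t ht =>
    Measure.le_iff.2 fun A hA => (hmap t ht A hA).1
  have hge : ∀ t ∈ Icc 0 T, μ.map (fun x => φ (t, x)) ≤ (c : ℝ≥0∞) • μ := fun t ht =>
    Measure.le_iff.2 fun A hA => (hmap t ht A hA).2
  exact ⟨forall_exists_flow_ne_zero_of_observable hφc hφ0 hφadd hT hsupp hge hχ,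
    observable_of_forall_exists_flow_ne_zero hφc hφ0 hφadd hT (zero_lt_one.trans_le hc) hle hge
      hχ⟩
end

section
/- Let f : ℝⁿ → ℝ be continuously differentiable with ∇f bounded and Lipschitz, and let (φ_t)_{t∈ℝ} denote the globally defined flow of ∇f, i.e. φ_0(x) = x and (d/dt) φ_t(x) = ∇f(φ_t(x)). For x, y ∈ ℝⁿ and t > 0, let U_t(x,y) denote the set of Lipschitz paths γ : [0,t] → ℝⁿ with γ(0) = x and γ(t) = y, and define d_{∇f}(x,y,t) := (1/4) · inf{ ∫₀^t |γ'(s) − ∇f(γ(s))|² ds : γ ∈ U_t(x,y) }. Then for all x, y ∈ ℝⁿ and t > 0: (i) d_{∇f}(x,y,t) ≥ 0; (ii) d_{∇f}(x,y,t) = 0 if and only if y = φ_t(x), that is, if and only if there exists a solution γ of γ'(s) = ∇f(γ(s)) with γ(0) = x and γ(t) = y. -/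
open MeasureTheory

/-- The cost `d_{∇f}(x,y,t)`: infimum of `(1/4)∫₀ᵗ |γ'(s) − ∇f(γ(s))|² ds` over
Lipschitz paths from `x` to `y` in time `t`. -/
noncomputable def dGrad5 (n : ℕ) (f : EuclideanSpace ℝ (Fin n) → ℝ)
    (x y : EuclideanSpace ℝ (Fin n)) (t : ℝ) : ℝ :=
  (1/4) * sInf { I : ℝ | ∃ γ : ℝ → EuclideanSpace ℝ (Fin n),
      (∃ K, LipschitzWith K γ) ∧ γ 0 = x ∧ γ t = y ∧
      I = ∫ s in (0:ℝ)..t, ‖deriv γ s - gradient f (γ s)‖^2 }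

/-!
Nonnegativity is clear, and the flow line through `x` is an admissible path of action zero.
Conversely, Grönwall's inequality compares an admissible path `γ` with the flow line:
`‖γ t - φ t x‖ ≤ e^{Kt} ∫₀ᵗ ‖γ' - ∇f(γ)‖`, and Cauchy–Schwarz turns this into
`‖γ t - φ t x‖² ≤ t e^{2Kt} ∫₀ᵗ ‖γ' - ∇f(γ)‖²`. Hence `‖y - φ t x‖²` is bounded by a multiple of
the infimum of the actions, and no compactness argument is needed. Finally, an integral curve
on `[0, t]` starting at `x` is the flow line, by uniqueness for Lipschitz ODEs.
-/

open Set Filter NNReal Real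

theorem le_mul_exp_of_le_add_mul_integral {u : ℝ → ℝ} {A K t : ℝ} (hu : Continuous u)
    (hK : 0 ≤ K) (ht : 0 ≤ t) (hle : ∀ s ∈ Icc 0 t, u s ≤ A + K * ∫ r in 0..s, u r) :
    u t ≤ A * exp (K * t) := by
  set ρ : ℝ → ℝ := fun s => ∫ r in 0..s, u r
  have hρ : ∀ s, HasDerivAt ρ (u s) s := fun s =>
    intervalIntegral.integral_hasDerivAt_right (hu.intervalIntegrable _ _)
      hu.aestronglyMeasurable.stronglyMeasurableAtFilter hu.continuousAt
  have hρt : ρ t ≤ gronwallBound 0 K A t := by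
    simpa using le_gronwallBound_of_liminf_deriv_right_le (f := ρ) (f' := u) (a := 0) (b := t)
      (fun s _ => (hρ s).continuousAt.continuousWithinAt)
      (fun s _ r hr => (hρ s).hasDerivWithinAt.liminf_right_slope_le hr) (by simp [ρ])
      (fun s hs => by linarith [hle s (Ico_subset_Icc_self hs)]) t ⟨ht, le_rfl⟩
  calc u t ≤ A + K * gronwallBound 0 K A t := by
        nlinarith [hle t ⟨ht, le_rfl⟩]
    _ = A * exp (K * t) := by
        rcases eq_or_ne K 0 with rfl | hK0
        · simp
        · rw [gronwallBound_of_K_ne_0 hK0]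
          field_simp
          ring

theorem sq_intervalIntegral_le_mul_intervalIntegral_sq {g : ℝ → ℝ} {a b : ℝ} (hab : a ≤ b)
    (hg : IntervalIntegrable g volume a b)
    (hg2 : IntervalIntegrable (fun s => g s ^ 2) volume a b) :
    (∫ s in a..b, g s) ^ 2 ≤ (b - a) * ∫ s in a..b, g s ^ 2 := by
  -- The quadratic `c ↦ ∫ (g - c)²` is nonnegative, so its discriminant is not positive.
  have hquad : ∀ c : ℝ, 0 ≤ (b - a) * (c * c) + (-2 * ∫ s in a..b, g s) * c
      + ∫ s in a..b, g s ^ 2 := fun c => by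
    have hexp : ∫ s in a..b, (g s - c) ^ 2
        = (b - a) * (c * c) + (-2 * ∫ s in a..b, g s) * c + ∫ s in a..b, g s ^ 2 := by
      simp only [sub_sq]
      rw [intervalIntegral.integral_add (hg2.sub ((hg.const_mul 2).mul_const c))
          intervalIntegrable_const,
        intervalIntegral.integral_sub hg2 ((hg.const_mul 2).mul_const c),
        intervalIntegral.integral_mul_const, intervalIntegral.integral_const_mul,
        intervalIntegral.integral_const, smul_eq_mul]
      ring
    rw [← hexp]
    exact intervalIntegral.integral_nonneg hab fun s _ => sq_nonneg _
  have := discrim_le_zero hquad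
  rw [discrim] at this
  linarith

section LipschitzPath

variable {E : Type*} [NormedAddCommGroup E] [NormedSpace ℝ E] [FiniteDimensional ℝ E]
  {L : ℝ≥0} {γ : ℝ → E}

theorem LipschitzWith.intervalIntegrable_norm_deriv_sub_pow (hγ : LipschitzWith L γ)
    {w : ℝ → E} (hw : Continuous w) (p : ℕ) (a b : ℝ) :
    IntervalIntegrable (fun s => ‖deriv γ s - w s‖ ^ p) volume a b := by
  obtain ⟨M, hM⟩ :=
    (isCompact_uIcc (a := a) (b := b)).exists_bound_of_continuousOn hw.continuousOn
  rw [intervalIntegrable_iff]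
  refine Measure.integrableOn_of_bounded measure_Ioc_lt_top.ne
    (((stronglyMeasurable_deriv γ).sub hw.stronglyMeasurable).norm.pow p).aestronglyMeasurable
    (M := (L + M) ^ p) ((ae_restrict_iff' measurableSet_uIoc).2 (.of_forall fun s hs => ?_))
  rw [norm_pow, norm_norm]
  gcongr
  exact (_root_.norm_sub_le _ _).trans
    (add_le_add (norm_deriv_le_of_lipschitz hγ) (hM s (uIoc_subset_uIcc hs)))

theorem LipschitzWith.intervalIntegrable_deriv (hγ : LipschitzWith L γ) (a b : ℝ) :
    IntervalIntegrable (deriv γ) volume a b := by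
  rw [intervalIntegrable_iff]
  exact Measure.integrableOn_of_bounded measure_Ioc_lt_top.ne
    (stronglyMeasurable_deriv γ).aestronglyMeasurable
    (.of_forall fun _ => norm_deriv_le_of_lipschitz hγ)

theorem LipschitzWith.integral_deriv_eq_sub (hγ : LipschitzWith L γ) (a b : ℝ) :
    ∫ s in a..b, deriv γ s = γ b - γ a := by
  -- Test against linear functionals: for real-valued Lipschitz functions this is the
  -- fundamental theorem of calculus for absolutely continuous functions.
  refine (SeparatingDual.eq_iff_forall_dual_eq (R := ℝ)).2 fun ℓ => ?_
  have hℓγ : LipschitzWith (‖ℓ‖₊ * L) (ℓ ∘ γ) := ℓ.lipschitz.comp hγ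
  calc ℓ (∫ s in a..b, deriv γ s) = ∫ s in a..b, ℓ (deriv γ s) :=
        (ℓ.intervalIntegral_comp_comm (hγ.intervalIntegrable_deriv a b)).symm
    _ = ∫ s in a..b, deriv (ℓ ∘ γ) s := by
        refine intervalIntegral.integral_congr_ae ?_
        filter_upwards [hγ.ae_differentiableAt_real] with s hs _
        exact (ℓ.hasFDerivAt.comp_hasDerivAt s hs.hasDerivAt).deriv.symm
    _ = ℓ (γ b - γ a) := by
        rw [hℓγ.lipschitzOnWith.absolutelyContinuousOnInterval.integral_deriv_eq_sub, map_sub]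
        rfl

theorem norm_sub_le_of_integral_approx_trajectory_ODE {v : E → E} {K : ℝ≥0}
    (hv : LipschitzWith K v) {φ : ℝ → E} (hφ : ∀ s, HasDerivAt φ (v (φ s)) s)
    (hγ : LipschitzWith L γ) (h0 : γ 0 = φ 0) {t : ℝ} (ht : 0 ≤ t) :
    ‖γ t - φ t‖ ≤ (∫ s in 0..t, ‖deriv γ s - v (γ s)‖) * exp (K * t) := by
  have hφc : Continuous φ := continuous_iff_continuousAt.2 fun s => (hφ s).continuousAt
  have hvφ : Continuous fun r => v (φ r) := hv.continuous.comp hφc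
  have hvγ : Continuous fun r => v (γ r) := hv.continuous.comp hγ.continuous
  have hdist : Continuous fun r => ‖γ r - φ r‖ := (hγ.continuous.sub hφc).norm
  have hdefect := hγ.intervalIntegrable_norm_deriv_sub_pow hvγ 1
  have hdefect' := hγ.intervalIntegrable_norm_deriv_sub_pow hvφ 1
  simp only [pow_one] at hdefect hdefect'
  refine le_mul_exp_of_le_add_mul_integral hdist K.2 ht fun s hs => ?_
  have hrepr : γ s - φ s = ∫ r in 0..s, (deriv γ r - v (φ r)) := by
    rw [intervalIntegral.integral_sub (hγ.intervalIntegrable_deriv 0 s)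
        (hvφ.intervalIntegrable 0 s), hγ.integral_deriv_eq_sub,
      intervalIntegral.integral_eq_sub_of_hasDerivAt (fun r _ => hφ r)
        (hvφ.intervalIntegrable 0 s), h0]
    abel
  have hpt : ∀ r, ‖deriv γ r - v (φ r)‖ ≤ ‖deriv γ r - v (γ r)‖ + K * ‖γ r - φ r‖ := fun r =>
    (norm_sub_le_norm_sub_add_norm_sub _ _ _).trans (add_le_add le_rfl (hv.norm_sub_le _ _))
  calc ‖γ s - φ s‖ ≤ ∫ r in 0..s, ‖deriv γ r - v (φ r)‖ := by
        rw [hrepr]; exact intervalIntegral.norm_integral_le_integral_norm hs.1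
    _ ≤ ∫ r in 0..s, (‖deriv γ r - v (γ r)‖ + K * ‖γ r - φ r‖) :=
        intervalIntegral.integral_mono_on hs.1 (hdefect' 0 s)
          ((hdefect 0 s).add ((hdist.intervalIntegrable 0 s).const_mul _)) fun r _ => hpt r
    _ = (∫ r in 0..s, ‖deriv γ r - v (γ r)‖) + K * ∫ r in 0..s, ‖γ r - φ r‖ := by
        rw [intervalIntegral.integral_add (hdefect 0 s)
          ((hdist.intervalIntegrable 0 s).const_mul _), intervalIntegral.integral_const_mul]
    _ ≤ _ := by
        gcongr
        exact intervalIntegral.integral_mono_interval le_rfl hs.1 hs.2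
          (.of_forall fun r => norm_nonneg _) (hdefect 0 t)

theorem sq_norm_sub_le_of_integral_sq_approx_trajectory_ODE {v : E → E} {K : ℝ≥0}
    (hv : LipschitzWith K v) {φ : ℝ → E} (hφ : ∀ s, HasDerivAt φ (v (φ s)) s)
    (hγ : LipschitzWith L γ) (h0 : γ 0 = φ 0) {t : ℝ} (ht : 0 ≤ t) :
    ‖γ t - φ t‖ ^ 2 ≤ t * (∫ s in 0..t, ‖deriv γ s - v (γ s)‖ ^ 2) * exp (K * t) ^ 2 := by
  have hvγ : Continuous fun r => v (γ r) := hv.continuous.comp hγ.continuous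
  have hCS := sq_intervalIntegral_le_mul_intervalIntegral_sq ht
    (by simpa using hγ.intervalIntegrable_norm_deriv_sub_pow hvγ 1 0 t)
    (hγ.intervalIntegrable_norm_deriv_sub_pow hvγ 2 0 t)
  rw [sub_zero] at hCS
  calc ‖γ t - φ t‖ ^ 2 ≤ ((∫ s in 0..t, ‖deriv γ s - v (γ s)‖) * exp (K * t)) ^ 2 := by
        gcongr
        exact norm_sub_le_of_integral_approx_trajectory_ODE hv hφ hγ h0 ht
    _ ≤ _ := by
        rw [mul_pow]
        gcongr

end LipschitzPath

theorem exists_lipschitzWith_path {E : Type*} [NormedAddCommGroup E] [NormedSpace ℝ E] (x y : E)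
    {t : ℝ} (ht : t ≠ 0) : ∃ γ : ℝ → E, (∃ K, LipschitzWith K γ) ∧ γ 0 = x ∧ γ t = y := by
  set w := t⁻¹ • (y - x)
  refine ⟨fun s => x + s • w, ⟨_, (LipschitzWith.const x).add
    (ContinuousLinearMap.toSpanSingleton ℝ w).lipschitz⟩, by simp, ?_⟩
  simp [w, smul_smul, mul_inv_cancel₀ ht]

section GradientCost

variable {n : ℕ} {f : EuclideanSpace ℝ (Fin n) → ℝ} {x y : EuclideanSpace ℝ (Fin n)} {t : ℝ}

def gradActionSet (n : ℕ) (f : EuclideanSpace ℝ (Fin n) → ℝ) (x y : EuclideanSpace ℝ (Fin n))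
    (t : ℝ) : Set ℝ :=
  { I : ℝ | ∃ γ : ℝ → EuclideanSpace ℝ (Fin n),
      (∃ K, LipschitzWith K γ) ∧ γ 0 = x ∧ γ t = y ∧
      I = ∫ s in (0:ℝ)..t, ‖deriv γ s - gradient f (γ s)‖^2 }

theorem dGrad5_eq : dGrad5 n f x y t = 1 / 4 * sInf (gradActionSet n f x y t) := rfl

theorem dGrad5_eq_zero_iff : dGrad5 n f x y t = 0 ↔ sInf (gradActionSet n f x y t) = 0 := by
  simp [dGrad5_eq]

theorem gradActionSet_nonempty (ht : t ≠ 0) : (gradActionSet n f x y t).Nonempty :=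
  let ⟨γ, hγ, h0, ht'⟩ := exists_lipschitzWith_path x y ht
  ⟨_, γ, hγ, h0, ht', rfl⟩

theorem nonneg_of_mem_gradActionSet (ht : 0 ≤ t) {I : ℝ} (hI : I ∈ gradActionSet n f x y t) :
    0 ≤ I := by
  obtain ⟨γ, -, -, -, rfl⟩ := hI
  exact intervalIntegral.integral_nonneg ht fun s _ => sq_nonneg _

theorem dGrad5_nonneg (ht : 0 ≤ t) : 0 ≤ dGrad5 n f x y t :=
  mul_nonneg (by norm_num) (Real.sInf_nonneg fun _ => nonneg_of_mem_gradActionSet ht)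

theorem dGrad5_eq_zero_of_hasDerivAt {γ : ℝ → EuclideanSpace ℝ (Fin n)}
    (hγ : ∃ K, LipschitzWith K γ) (hγ' : ∀ s, HasDerivAt γ (gradient f (γ s)) s)
    (h0 : γ 0 = x) (ht' : γ t = y) (ht : 0 ≤ t) : dGrad5 n f x y t = 0 := by
  have hmem : 0 ∈ gradActionSet n f x y t :=
    ⟨γ, hγ, h0, ht', by simp [(hγ' _).deriv]⟩
  exact dGrad5_eq_zero_iff.2 <| le_antisymm
    (csInf_le ⟨0, fun _ => nonneg_of_mem_gradActionSet ht⟩ hmem)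
    (Real.sInf_nonneg fun _ => nonneg_of_mem_gradActionSet ht)

theorem eq_of_dGrad5_eq_zero {K : ℝ≥0} (hK : LipschitzWith K (gradient f))
    {φ : ℝ → EuclideanSpace ℝ (Fin n)} (hφ : ∀ s, HasDerivAt φ (gradient f (φ s)) s)
    (hφ0 : φ 0 = x) (ht : 0 < t) (h : dGrad5 n f x y t = 0) : y = φ t := by
  have hpos : 0 < t * exp (K * t) ^ 2 := by positivity
  have hbound : ‖y - φ t‖ ^ 2 / (t * exp (K * t) ^ 2) ≤ sInf (gradActionSet n f x y t) := by
    refine le_csInf (gradActionSet_nonempty ht.ne') ?_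
    rintro _ ⟨γ, ⟨L, hγ⟩, h0, rfl, rfl⟩
    rw [div_le_iff₀ hpos]
    have := sq_norm_sub_le_of_integral_sq_approx_trajectory_ODE hK hφ hγ (h0.trans hφ0.symm)
      ht.le
    linarith
  have hsq : ‖y - φ t‖ ^ 2 ≤ 0 := by
    rw [← zero_mul (t * exp (K * t) ^ 2), ← div_le_iff₀ hpos]
    exact hbound.trans_eq (dGrad5_eq_zero_iff.1 h)
  rw [← sub_eq_zero, ← norm_eq_zero]
  exact pow_eq_zero_iff two_ne_zero |>.1 (le_antisymm hsq (sq_nonneg _))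

end GradientCost

theorem stmt5_general (n : ℕ) (f : EuclideanSpace ℝ (Fin n) → ℝ)
    (hbdd : ∃ C, ∀ z, ‖gradient f z‖ ≤ C)
    (hlip : ∃ K, LipschitzWith K (gradient f))
    (φ : ℝ → EuclideanSpace ℝ (Fin n) → EuclideanSpace ℝ (Fin n))
    (hφ0 : ∀ x, φ 0 x = x)
    (hφ : ∀ (t : ℝ) (x : EuclideanSpace ℝ (Fin n)),
      HasDerivAt (fun s => φ s x) (gradient f (φ t x)) t)
    (x y : EuclideanSpace ℝ (Fin n)) (t : ℝ) (ht : 0 < t) :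
    0 ≤ dGrad5 n f x y t ∧
    (dGrad5 n f x y t = 0 ↔ y = φ t x) ∧
    (dGrad5 n f x y t = 0 ↔
      ∃ γ : ℝ → EuclideanSpace ℝ (Fin n),
        (∀ s ∈ Set.Icc (0:ℝ) t, HasDerivAt γ (gradient f (γ s)) s) ∧
        γ 0 = x ∧ γ t = y) := by
  obtain ⟨C, hC⟩ := hbdd
  obtain ⟨K, hK⟩ := hlip
  have hflow_lip : LipschitzWith C.toNNReal fun s => φ s x :=
    lipschitzWith_of_nnnorm_deriv_le (fun s => (hφ s x).differentiableAt) fun s => by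
      rw [(hφ s x).deriv]
      exact NNReal.le_toNNReal_of_coe_le (hC _)
  have hzero : dGrad5 n f x y t = 0 ↔ y = φ t x :=
    ⟨eq_of_dGrad5_eq_zero hK (hφ · x) (hφ0 x) ht,
      fun hy => dGrad5_eq_zero_of_hasDerivAt ⟨_, hflow_lip⟩ (hφ · x) (hφ0 x) hy.symm ht.le⟩
  refine ⟨dGrad5_nonneg ht.le, hzero,
    hzero.trans ⟨fun hy => ⟨_, fun s _ => hφ s x, hφ0 x, hy.symm⟩, ?_⟩⟩
  rintro ⟨γ, hγ, hγ0, rfl⟩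
  exact ODE_solution_unique (v := fun _ => gradient f) (fun _ => hK)
    (fun s hs => (hγ s hs).continuousAt.continuousWithinAt)
    (fun s hs => (hγ s (Ico_subset_Icc_self hs)).hasDerivWithinAt)
    (fun s _ => (hφ s x).continuousAt.continuousWithinAt)
    (fun s _ => (hφ s x).hasDerivWithinAt) (by rw [hγ0, hφ0]) ⟨ht.le, le_rfl⟩

/-- Proposition A.4 (Euclidean form): `d_{∇f}(x,y,t) ≥ 0`, with equality if and
only if `y = φ_t(x)`, i.e. iff there is an integral curve of `∇f` from `x` to `y`
in time `t`. -/
theorem stmt5 (n : ℕ) (f : EuclideanSpace ℝ (Fin n) → ℝ)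
    (hf : ContDiff ℝ 1 f) (hbdd : ∃ C, ∀ z, ‖gradient f z‖ ≤ C)
    (hlip : ∃ K, LipschitzWith K (gradient f))
    (φ : ℝ → EuclideanSpace ℝ (Fin n) → EuclideanSpace ℝ (Fin n))
    (hφ0 : ∀ x, φ 0 x = x)
    (hφ : ∀ (t : ℝ) (x : EuclideanSpace ℝ (Fin n)),
      HasDerivAt (fun s => φ s x) (gradient f (φ t x)) t)
    (x y : EuclideanSpace ℝ (Fin n)) (t : ℝ) (ht : 0 < t) :
    0 ≤ dGrad5 n f x y t ∧
    (dGrad5 n f x y t = 0 ↔ y = φ t x) ∧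
    (dGrad5 n f x y t = 0 ↔
      ∃ γ : ℝ → EuclideanSpace ℝ (Fin n),
        (∀ s ∈ Set.Icc (0:ℝ) t, HasDerivAt γ (gradient f (γ s)) s) ∧
        γ 0 = x ∧ γ t = y) :=
  stmt5_general n f hbdd hlip φ hφ0 hφ x y t ht
end

section
/- Let M be a compact metric space and ν a finite Borel measure on M with full support (every nonempty open set has positive ν-measure). Let T > 0, s ∈ (0,T], C₀ > 0; let K : M × M × (0,T] → [0,∞) be continuous with sup{ ∫_M K(x,y,t) dν(x) : y ∈ M, t ∈ (0,T] } < ∞; and let w₁ : [0,T] × M → [0,∞) and w₂ : M → [0,∞) be continuous. Define O_T(y) := ∫₀^T ∫_M w₁(t,x) K(x,y,t) dν(x) dt and I_s(y) := ∫_M w₂(x) K(x,y,s) dν(x). Then the following are equivalent: (1) for every finite nonnegative Borel measure μ on M, ∫_M w₂(x) (∫_M K(x,y,s) dμ(y)) dν(x) ≤ C₀ ∫₀^T ∫_M w₁(t,x) (∫_M K(x,y,t) dμ(y)) dν(x) dt; (2) the same inequality holds for every μ of the form dμ = u₀ dν with u₀ ∈ L¹(ν) nonnegative; (3) the same inequality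 holds for every Dirac mass μ = δ_y, y ∈ M; (4) I_s(y) ≤ C₀ O_T(y) for every y ∈ M. -/
/-! By Fubini–Tonelli, for every finite measure `μ` both sides of the observability inequality are
integrals against `μ` of the continuous functions `I_s` and `C₀ O_T`; this gives (4) ⇒ (1), while
(1) ⇒ (2), (3) specialise `μ` to `u₀ ν` and to Dirac masses and (3) ⇒ (4) is immediate.
For (2) ⇒ (4), taking `u₀ = 1_S` yields `∫_S I_s dν ≤ ∫_S C₀ O_T dν` for every Borel set `S`, hence
`I_s ≤ C₀ O_T` almost everywhere, and then everywhere because both sides are continuous and `ν`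
charges every nonempty open set. Although `K` may blow up as `t → 0`, the bound on `∫ K dν` keeps
`t ↦ ∫ w₁ K dν` uniformly bounded, which is what makes `O_T` continuous and the time integral
commute with `μ`. -/

open MeasureTheory Set Filter Topology
open scoped ENNReal

section ParametricIntegral

variable {X Y E : Type*} [TopologicalSpace X] [FirstCountableTopology X]
  [TopologicalSpace Y] [CompactSpace Y] [MeasurableSpace Y] [OpensMeasurableSpace Y]
  [NormedAddCommGroup E] [NormedSpace ℝ E] [SecondCountableTopologyEither Y E]

/-- No local compactness of `X` is needed: the tube lemma over the compact `Y` bounds `f` uniformly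
near `x₀`, which is all dominated convergence asks for. -/
theorem continuousOn_integral_of_continuousOn_uncurry (ν : Measure Y) [IsFiniteMeasure ν]
    {f : X → Y → E} {s : Set X} (hf : ContinuousOn (Function.uncurry f) (s ×ˢ univ)) :
    ContinuousOn (fun x => ∫ y, f x y ∂ν) s := by
  intro x₀ hx₀
  have hslice : ∀ x ∈ s, Continuous (f x) := fun x hx =>
    hf.comp_continuous (continuous_const.prodMk continuous_id) fun _ => ⟨hx, trivial⟩
  obtain ⟨C, hC⟩ := isCompact_univ.exists_bound_of_continuousOn (hslice x₀ hx₀).norm.continuousOn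
  have hbound : ∀ᶠ x in 𝓝[s] x₀, ∀ y, ‖f x y‖ ≤ C + 1 := by
    have hloc : ∀ y ∈ (univ : Set Y), {p : X × Y | ‖f p.1 p.2‖ ≤ C + 1} ∈ 𝓝[s] x₀ ×ˢ 𝓝 y := by
      intro y _
      have hcont := (hf (x₀, y) ⟨hx₀, trivial⟩).norm
      rw [ContinuousWithinAt, nhdsWithin_prod_eq, nhdsWithin_univ] at hcont
      have hy : ‖f x₀ y‖ < C + 1 := by linarith [norm_norm (f x₀ y), hC y trivial]
      exact hcont.eventually (eventually_le_nhds hy)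
    have := isCompact_univ.mem_prod_nhdsSet_of_forall hloc
    rw [nhdsSet_univ, prod_top] at this
    obtain ⟨t, ht, hts⟩ := this
    filter_upwards [ht] with x hx y using hts (show (x, y).1 ∈ t from hx)
  refine continuousWithinAt_of_dominated (bound := fun _ => C + 1) ?_ ?_
    (integrable_const _) ?_
  · filter_upwards [self_mem_nhdsWithin] with x hx using (hslice x hx).aestronglyMeasurable
  · filter_upwards [hbound] with x hx using ae_of_all _ hx
  · exact ae_of_all _ fun y =>
      (hf.comp (continuous_id.prodMk continuous_const).continuousOn
        fun x hx => ⟨hx, trivial⟩) x₀ hx₀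

end ParametricIntegral

section BoundedContinuousOn

variable {α β : Type*} [TopologicalSpace α] [MeasurableSpace α] [OpensMeasurableSpace α]
  [TopologicalSpace β] {ρ : Measure α} {S : Set α} {G : α → β → ℝ} {C : ℝ}

theorem continuous_setIntegral_of_continuousOn_of_bound [FirstCountableTopology β]
    (hS : MeasurableSet S) (hρS : ρ S ≠ ∞) (hG : ContinuousOn (Function.uncurry G) (S ×ˢ univ))
    (hC : ∀ t ∈ S, ∀ y, ‖G t y‖ ≤ C) :
    Continuous fun y => ∫ t in S, G t y ∂ρ := by
  have : IsFiniteMeasure (ρ.restrict S) := isFiniteMeasure_restrict.2 hρS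
  refine continuous_of_dominated (bound := fun _ => C) (fun y => ?_) (fun y => ?_)
    (integrable_const C) ?_
  · exact (hG.comp (continuous_id.prodMk continuous_const).continuousOn
      fun t ht => ⟨ht, trivial⟩).aestronglyMeasurable hS
  · filter_upwards [ae_restrict_mem hS] with t ht using hC t ht y
  · filter_upwards [ae_restrict_mem hS] with t ht
    exact hG.comp_continuous (continuous_const.prodMk continuous_id) fun _ => ⟨ht, trivial⟩

theorem integral_setIntegral_swap_of_continuousOn_of_bound [MeasurableSpace β]
    [OpensMeasurableSpace β] [SecondCountableTopologyEither α β]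
    [SFinite ρ] (μ : Measure β) [IsFiniteMeasure μ] (hS : MeasurableSet S) (hρS : ρ S ≠ ∞)
    (hG : ContinuousOn (Function.uncurry G) (S ×ˢ univ)) (hC : ∀ t ∈ S, ∀ y, ‖G t y‖ ≤ C) :
    ∫ t in S, ∫ y, G t y ∂μ ∂ρ = ∫ y, ∫ t in S, G t y ∂ρ ∂μ := by
  have : IsFiniteMeasure (ρ.restrict S) := isFiniteMeasure_restrict.2 hρS
  have hprod : (ρ.restrict S).prod μ = (ρ.prod μ).restrict (S ×ˢ univ) := by
    rw [← Measure.prod_restrict, Measure.restrict_univ]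
  refine integral_integral_swap (.of_bound ?_ C ?_)
  · rw [hprod]
    exact hG.aestronglyMeasurable (hS.prod .univ)
  · rw [hprod]
    filter_upwards [ae_restrict_mem (hS.prod .univ)] with p hp using hC p.1 hp.1 p.2

end BoundedContinuousOn

theorem Continuous.integrable_of_compactSpace {X E : Type*} [TopologicalSpace X] [CompactSpace X]
    [MeasurableSpace X] [OpensMeasurableSpace X] [NormedAddCommGroup E] (μ : Measure X)
    [IsFiniteMeasure μ] {f : X → E} (hf : Continuous f) : Integrable f μ :=
  hf.integrable_of_hasCompactSupport (.of_compactSpace f)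

section CompactFubini

variable {X Y : Type*} [TopologicalSpace X] [CompactSpace X] [MeasurableSpace X]
  [OpensMeasurableSpace X] [TopologicalSpace Y] [CompactSpace Y] [MeasurableSpace Y]
  [OpensMeasurableSpace Y] [SecondCountableTopologyEither X Y]

theorem integral_mul_integral_swap_of_continuous (ν : Measure X) (μ : Measure Y)
    [IsFiniteMeasure ν] [IsFiniteMeasure μ] {w : X → ℝ} (hw : Continuous w) {k : X → Y → ℝ}
    (hk : Continuous (Function.uncurry k)) :
    ∫ x, w x * ∫ y, k x y ∂μ ∂ν = ∫ y, ∫ x, w x * k x y ∂ν ∂μ := by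
  simp_rw [← integral_const_mul]
  exact integral_integral_swap (((hw.comp continuous_fst).mul hk).integrable_of_compactSpace _)

end CompactFubini

theorem Continuous.le_of_forall_setIntegral_le {X : Type*} [TopologicalSpace X]
    [MeasurableSpace X] {ν : Measure X} [ν.IsOpenPosMeasure] {f g : X → ℝ}
    (hf : Continuous f) (hg : Continuous g) (hfi : Integrable f ν) (hgi : Integrable g ν)
    (hfg : ∀ S, MeasurableSet S → ∫ x in S, f x ∂ν ≤ ∫ x in S, g x ∂ν) : f ≤ g := by
  have hdense : Dense {x | f x ≤ g x} :=
    ν.dense_of_ae (ae_le_of_forall_setIntegral_le hfi hgi fun S hS _ => hfg S hS)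
  exact fun x => eq_univ_iff_forall.1 ((isClosed_le hf hg).closure_eq ▸ hdense.closure_eq) x

section Observation

variable {M : Type*} [MetricSpace M] [CompactSpace M] [MeasurableSpace M] [BorelSpace M]
  {ν : Measure M} [IsFiniteMeasure ν] {T : ℝ} {K : M → M → ℝ → ℝ} {w₁ : ℝ × M → ℝ}

theorem continuousOn_observationDensity
    (hKc : ContinuousOn (fun p : M × M × ℝ => K p.1 p.2.1 p.2.2) (univ ×ˢ univ ×ˢ Ioc 0 T))
    (hw₁c : ContinuousOn w₁ (Icc 0 T ×ˢ (univ : Set M))) :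
    ContinuousOn (Function.uncurry fun t y => ∫ x, w₁ (t, x) * K x y t ∂ν)
      (Ioc 0 T ×ˢ univ) := by
  refine continuousOn_integral_of_continuousOn_uncurry
    (f := fun (p : ℝ × M) (x : M) => w₁ (p.1, x) * K x p.2 p.1) ν ?_
  refine (hw₁c.comp (f := fun q : (ℝ × M) × M => (q.1.1, q.2)) (by fun_prop) ?_).mul
    (hKc.comp (f := fun q : (ℝ × M) × M => (q.2, q.1.2, q.1.1)) (by fun_prop) ?_)
  · exact fun q hq => ⟨Ioc_subset_Icc_self hq.1.1, trivial⟩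
  · exact fun q hq => ⟨trivial, trivial, hq.1.1⟩

theorem exists_bound_observationDensity (hK0 : ∀ x y : M, ∀ t ∈ Ioc (0:ℝ) T, 0 ≤ K x y t)
    (hKc : ContinuousOn (fun p : M × M × ℝ => K p.1 p.2.1 p.2.2) (univ ×ˢ univ ×ˢ Ioc 0 T))
    (hKsup : ∃ B : ℝ, ∀ y : M, ∀ t ∈ Ioc (0:ℝ) T, ∫ x, K x y t ∂ν ≤ B)
    (hw₁c : ContinuousOn w₁ (Icc 0 T ×ˢ (univ : Set M))) :
    ∃ C, ∀ t ∈ Ioc 0 T, ∀ y, ‖∫ x, w₁ (t, x) * K x y t ∂ν‖ ≤ C := by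
  obtain ⟨B, hB⟩ := hKsup
  obtain ⟨C₁, hC₁⟩ := (isCompact_Icc.prod isCompact_univ).exists_bound_of_continuousOn hw₁c
  refine ⟨C₁ * B, fun t ht y => ?_⟩
  have hKt : Continuous fun x => K x y t :=
    hKc.comp_continuous (f := fun x => (x, y, t)) (by fun_prop) fun _ => ⟨trivial, trivial, ht⟩
  calc ‖∫ x, w₁ (t, x) * K x y t ∂ν‖
      ≤ ∫ x, C₁ * K x y t ∂ν := by
        refine norm_integral_le_of_norm_le ((hKt.integrable_of_compactSpace ν).const_mul C₁)
          (ae_of_all _ fun x => ?_)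
        rw [norm_mul, Real.norm_of_nonneg (hK0 x y t ht)]
        exact mul_le_mul_of_nonneg_right (hC₁ (t, x) ⟨Ioc_subset_Icc_self ht, trivial⟩)
          (hK0 x y t ht)
    _ = C₁ * ∫ x, K x y t ∂ν := integral_const_mul _ _
    _ ≤ C₁ * B := mul_le_mul_of_nonneg_left (hB y t ht)
        ((norm_nonneg _).trans (hC₁ (0, y) ⟨left_mem_Icc.2 (ht.1.le.trans ht.2), trivial⟩))

theorem continuous_observation (hT : 0 ≤ T)
    (hK0 : ∀ x y : M, ∀ t ∈ Ioc (0:ℝ) T, 0 ≤ K x y t)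
    (hKc : ContinuousOn (fun p : M × M × ℝ => K p.1 p.2.1 p.2.2) (univ ×ˢ univ ×ˢ Ioc 0 T))
    (hKsup : ∃ B : ℝ, ∀ y : M, ∀ t ∈ Ioc (0:ℝ) T, ∫ x, K x y t ∂ν ≤ B)
    (hw₁c : ContinuousOn w₁ (Icc 0 T ×ˢ (univ : Set M))) :
    Continuous fun y => ∫ t in 0..T, ∫ x, w₁ (t, x) * K x y t ∂ν := by
  obtain ⟨C, hC⟩ := exists_bound_observationDensity hK0 hKc hKsup hw₁c
  simp_rw [intervalIntegral.integral_of_le hT]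
  exact continuous_setIntegral_of_continuousOn_of_bound measurableSet_Ioc measure_Ioc_lt_top.ne
    (continuousOn_observationDensity hKc hw₁c) hC

theorem intervalIntegral_observation_swap (hT : 0 ≤ T)
    (hK0 : ∀ x y : M, ∀ t ∈ Ioc (0:ℝ) T, 0 ≤ K x y t)
    (hKc : ContinuousOn (fun p : M × M × ℝ => K p.1 p.2.1 p.2.2) (univ ×ˢ univ ×ˢ Ioc 0 T))
    (hKsup : ∃ B : ℝ, ∀ y : M, ∀ t ∈ Ioc (0:ℝ) T, ∫ x, K x y t ∂ν ≤ B)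
    (hw₁c : ContinuousOn w₁ (Icc 0 T ×ˢ (univ : Set M)))
    (μ : Measure M) [IsFiniteMeasure μ] :
    ∫ t in 0..T, ∫ x, w₁ (t, x) * ∫ y, K x y t ∂μ ∂ν =
      ∫ y, (∫ t in 0..T, ∫ x, w₁ (t, x) * K x y t ∂ν) ∂μ := by
  obtain ⟨C, hC⟩ := exists_bound_observationDensity hK0 hKc hKsup hw₁c
  simp_rw [intervalIntegral.integral_of_le hT]
  calc ∫ t in Ioc 0 T, ∫ x, w₁ (t, x) * ∫ y, K x y t ∂μ ∂ν
      = ∫ t in Ioc 0 T, ∫ y, ∫ x, w₁ (t, x) * K x y t ∂ν ∂μ := by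
        refine setIntegral_congr_fun measurableSet_Ioc fun t ht => ?_
        exact integral_mul_integral_swap_of_continuous ν μ
          (hw₁c.comp_continuous (f := fun x => (t, x)) (by fun_prop)
            fun _ => ⟨Ioc_subset_Icc_self ht, trivial⟩)
          (hKc.comp_continuous (f := fun p : M × M => (p.1, p.2, t)) (by fun_prop)
            fun _ => ⟨trivial, trivial, ht⟩)
    _ = _ := integral_setIntegral_swap_of_continuousOn_of_bound μ measurableSet_Ioc
        measure_Ioc_lt_top.ne (continuousOn_observationDensity hKc hw₁c) hC

end Observation

theorem stmt7_general {M : Type*} [MetricSpace M] [CompactSpace M]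
    [MeasurableSpace M] [BorelSpace M]
    (ν : Measure M) [IsFiniteMeasure ν]
    (hsupp : ∀ U : Set M, IsOpen U → U.Nonempty → 0 < ν U)
    (T s C₀ : ℝ) (hs : s ∈ Set.Ioc 0 T)
    (K : M → M → ℝ → ℝ)
    (hK0 : ∀ x y : M, ∀ t ∈ Set.Ioc (0:ℝ) T, 0 ≤ K x y t)
    (hKc : ContinuousOn (fun p : M × M × ℝ => K p.1 p.2.1 p.2.2)
      (Set.univ ×ˢ Set.univ ×ˢ Set.Ioc 0 T))
    (hKsup : ∃ B : ℝ, ∀ y : M, ∀ t ∈ Set.Ioc (0:ℝ) T, (∫ x, K x y t ∂ν) ≤ B)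
    (w₁ : ℝ × M → ℝ)
    (hw₁c : ContinuousOn w₁ (Set.Icc 0 T ×ˢ (Set.univ : Set M)))
    (w₂ : M → ℝ) (hw₂c : Continuous w₂) :
    [ (∀ μ : Measure M, IsFiniteMeasure μ →
        (∫ x, w₂ x * (∫ y, K x y s ∂μ) ∂ν) ≤
          C₀ * ∫ t in (0:ℝ)..T, ∫ x, w₁ (t, x) * (∫ y, K x y t ∂μ) ∂ν),
      (∀ u₀ : M → ℝ, Integrable u₀ ν → (∀ y, 0 ≤ u₀ y) →
        (∫ x, w₂ x * (∫ y, K x y s * u₀ y ∂ν) ∂ν) ≤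
          C₀ * ∫ t in (0:ℝ)..T, ∫ x, w₁ (t, x) * (∫ y, K x y t * u₀ y ∂ν) ∂ν),
      (∀ y₀ : M,
        (∫ x, w₂ x * (∫ y, K x y s ∂(Measure.dirac y₀)) ∂ν) ≤
          C₀ * ∫ t in (0:ℝ)..T, ∫ x, w₁ (t, x) * (∫ y, K x y t ∂(Measure.dirac y₀)) ∂ν),
      (∀ y₀ : M,
        (∫ x, w₂ x * K x y₀ s ∂ν) ≤
          C₀ * ∫ t in (0:ℝ)..T, ∫ x, w₁ (t, x) * K x y₀ t ∂ν) ].TFAE := by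
  have hT : 0 ≤ T := hs.1.le.trans hs.2
  have hKs : Continuous fun p : M × M => K p.1 p.2 s :=
    hKc.comp_continuous (f := fun p : M × M => (p.1, p.2, s)) (by fun_prop)
      fun _ => ⟨trivial, trivial, hs⟩
  have hI : Continuous fun y => ∫ x, w₂ x * K x y s ∂ν :=
    continuousOn_univ.1 <| continuousOn_integral_of_continuousOn_uncurry
      (f := fun y x => w₂ x * K x y s) ν (by fun_prop)
  have hO := continuous_observation hT hK0 hKc hKsup hw₁c (ν := ν)
  have hI_swap (μ : Measure M) [IsFiniteMeasure μ] :=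
    integral_mul_integral_swap_of_continuous ν μ hw₂c (k := fun x y => K x y s) hKs
  have hO_swap (μ : Measure M) [IsFiniteMeasure μ] :=
    intervalIntegral_observation_swap hT hK0 hKc hKsup hw₁c μ
  tfae_have 1 → 2 := fun h1 u₀ hu hu0 => by
    have := h1 _ (isFiniteMeasure_withDensity_ofReal hu.2)
    simpa only [integral_withDensity_eq_integral_toReal_smul₀ hu.1.aemeasurable.ennreal_ofReal
      (ae_of_all _ fun _ => ENNReal.ofReal_lt_top), ENNReal.toReal_ofReal (hu0 _), smul_eq_mul,
      mul_comm (u₀ _)] using this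
  tfae_have 2 → 4 := fun h2 => by
    have : ν.IsOpenPosMeasure := ⟨fun U hU hne => (hsupp U hU hne).ne'⟩
    refine Continuous.le_of_forall_setIntegral_le hI (continuous_const.mul hO)
      (hI.integrable_of_compactSpace ν) ((continuous_const.mul hO).integrable_of_compactSpace ν)
      fun S hS => ?_
    have := h2 (S.indicator 1) ((integrable_const 1).indicator hS) (indicator_nonneg (by simp))
    have hind (f : M → ℝ) : ∫ y, f y * S.indicator 1 y ∂ν = ∫ y in S, f y ∂ν := by
      simp_rw [← indicator_mul_right, Pi.one_apply, mul_one, integral_indicator hS]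
    simp only [hind] at this
    rwa [hI_swap, hO_swap, ← integral_const_mul] at this
  tfae_have 4 → 1 := fun h4 μ _ => by
    rw [hI_swap, hO_swap, ← integral_const_mul]
    exact integral_mono (hI.integrable_of_compactSpace μ)
      ((continuous_const.mul hO).integrable_of_compactSpace μ) h4
  tfae_have 1 → 3 := fun h1 y₀ => h1 _ inferInstance
  tfae_have 3 → 4 := fun h3 y₀ => by simpa only [integral_dirac] using h3 y₀
  tfae_finish

/-- Proposition 5.4: for a nonnegative continuous kernel `K` on a compact metric
space with a finite fully supported reference measure `ν`, weighted `L¹`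
observability of all nonnegative solutions (i.e. of `S(t)μ(x) = ∫ K(x,y,t) dμ(y)`)
is equivalent for general nonnegative finite measures, for `L¹` densities, for
Dirac masses, and to the pointwise observability of the kernel. -/
theorem stmt7 {M : Type*} [MetricSpace M] [CompactSpace M]
    [MeasurableSpace M] [BorelSpace M]
    (ν : Measure M) [IsFiniteMeasure ν]
    (hsupp : ∀ U : Set M, IsOpen U → U.Nonempty → 0 < ν U)
    (T s C₀ : ℝ) (hT : 0 < T) (hs : s ∈ Set.Ioc 0 T) (hC₀ : 0 < C₀)
    (K : M → M → ℝ → ℝ)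
    (hK0 : ∀ x y : M, ∀ t ∈ Set.Ioc (0:ℝ) T, 0 ≤ K x y t)
    (hKc : ContinuousOn (fun p : M × M × ℝ => K p.1 p.2.1 p.2.2)
      (Set.univ ×ˢ Set.univ ×ˢ Set.Ioc 0 T))
    (hKsup : ∃ B : ℝ, ∀ y : M, ∀ t ∈ Set.Ioc (0:ℝ) T, (∫ x, K x y t ∂ν) ≤ B)
    (w₁ : ℝ × M → ℝ)
    (hw₁c : ContinuousOn w₁ (Set.Icc 0 T ×ˢ (Set.univ : Set M)))
    (hw₁0 : ∀ t ∈ Set.Icc (0:ℝ) T, ∀ x : M, 0 ≤ w₁ (t, x))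
    (w₂ : M → ℝ) (hw₂c : Continuous w₂) (hw₂0 : ∀ x, 0 ≤ w₂ x) :
    [ (∀ μ : Measure M, IsFiniteMeasure μ →
        (∫ x, w₂ x * (∫ y, K x y s ∂μ) ∂ν) ≤
          C₀ * ∫ t in (0:ℝ)..T, ∫ x, w₁ (t, x) * (∫ y, K x y t ∂μ) ∂ν),
      (∀ u₀ : M → ℝ, Integrable u₀ ν → (∀ y, 0 ≤ u₀ y) →
        (∫ x, w₂ x * (∫ y, K x y s * u₀ y ∂ν) ∂ν) ≤
          C₀ * ∫ t in (0:ℝ)..T, ∫ x, w₁ (t, x) * (∫ y, K x y t * u₀ y ∂ν) ∂ν),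
      (∀ y₀ : M,
        (∫ x, w₂ x * (∫ y, K x y s ∂(Measure.dirac y₀)) ∂ν) ≤
          C₀ * ∫ t in (0:ℝ)..T, ∫ x, w₁ (t, x) * (∫ y, K x y t ∂(Measure.dirac y₀)) ∂ν),
      (∀ y₀ : M,
        (∫ x, w₂ x * K x y₀ s ∂ν) ≤
          C₀ * ∫ t in (0:ℝ)..T, ∫ x, w₁ (t, x) * K x y₀ t ∂ν) ].TFAE :=
  stmt7_general ν hsupp T s C₀ hs K hK0 hKc hKsup w₁ hw₁c w₂ hw₂c
end

section
/- Let H and K be real Hilbert spaces, L : H → H and O : H → K bounded linear operators, and C > 0. Let 𝒱 ⊆ H be a closed convex set with 0 ∈ 𝒱, and let 𝒱̃ ⊆ 𝒱 be a subset such that u + v ∈ 𝒱 for every u ∈ 𝒱̃ and every v ∈ 𝒱. Assume the observability inequality ‖L u‖_H ≤ C ‖O u‖_K holds for all u ∈ 𝒱. Then for every y₀ ∈ H there exists h ∈ K with ‖h‖_K ≤ C ‖y₀‖_H such that ⟨L* y₀ + O* h, u₀⟩_H ≥ 0 for every u₀ ∈ 𝒱̃. -/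
open scoped RealInnerProductSpace

/-!
Directions `x` with `x + V ⊆ V` form a convex cone (the recession cone of `V`), so the cone `P`
generated by `Vt` lies in `V`, and there the observability inequality gives
`-⟪y₀, L u⟫ ≤ C‖y₀‖ ‖O u‖`. Thus the image of `P` under `u ↦ (O u, ⟪y₀, L u⟫)` misses the open
convex region `t + C‖y₀‖ ‖k‖ < 0` of `K × ℝ`. A Hahn–Banach functional separating the two is
nonnegative on the image (a cone) and, normalised by its value at `(0, 1)`, has the form
`(k, t) ↦ ⟪h, k⟫ + t` with `‖h‖ ≤ C‖y₀‖`; this `h` is the control.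
-/

section RecessionCone

variable {E : Type*} [AddCommGroup E] [Module ℝ E] {V : Set E}

def Convex.recessionCone (hV : Convex ℝ V) : PointedCone ℝ E where
  carrier := {x | ∀ v ∈ V, x + v ∈ V}
  zero_mem' := by simp
  add_mem' {x y} hx hy v hv := by simpa only [add_assoc] using hx _ (hy v hv)
  smul_mem' := by
    rintro ⟨c, hc⟩ x (hx : ∀ v ∈ V, x + v ∈ V) v hv
    have nsmul_add_mem (n : ℕ) : (n : ℝ) • x + v ∈ V := by
      induction n with
      | zero => simpa using hv
      | succ n ih =>
        rw [Nat.cast_succ, add_smul, one_smul, add_comm _ x, add_assoc]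
        exact hx _ ih
    obtain ⟨n, hn⟩ := exists_nat_gt c
    have hn0 : (0 : ℝ) < n := hc.trans_lt hn
    have hmem := hV.add_smul_mem hv (by rw [add_comm]; exact nsmul_add_mem n)
      (t := c / n) ⟨by positivity, (div_le_one hn0).2 hn.le⟩
    rwa [smul_smul, div_mul_cancel₀ _ hn0.ne', add_comm] at hmem

theorem Convex.recessionCone_subset (hV : Convex ℝ V) (h0 : (0 : E) ∈ V) :
    (hV.recessionCone : Set E) ⊆ V :=
  fun x hx => by simpa using hx 0 h0

end RecessionCone

theorem geometric_hahn_banach_open_pointedCone {E : Type*} [TopologicalSpace E]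
    [AddCommGroup E] [IsTopologicalAddGroup E] [Module ℝ E] [ContinuousSMul ℝ E]
    [LocallyConvexSpace ℝ E] {U : Set E} (hUc : Convex ℝ U) (hUo : IsOpen U)
    (A : PointedCone ℝ E) (hUA : Disjoint U A) :
    ∃ f : StrongDual ℝ E, (∀ p ∈ U, f p < 0) ∧ ∀ p ∈ A, 0 ≤ f p := by
  obtain ⟨f, u, hfU, hfA⟩ := geometric_hahn_banach_open hUc hUo A.convex hUA
  have hu : u ≤ 0 := by simpa using hfA 0 A.zero_mem
  refine ⟨f, fun p hp => (hfU p hp).trans_le hu, fun p hp => ?_⟩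
  by_contra! hneg
  -- a large multiple of `p` would fall below the level `u`
  have hc : 0 ≤ (u - 1) / f p := div_nonneg_of_nonpos (by linarith) hneg.le
  have := hfA _ (A.smul_mem hc hp)
  rw [map_smul, smul_eq_mul, div_mul_cancel₀ _ hneg.ne] at this
  linarith

section NormCone

variable {K : Type*} [NormedAddCommGroup K] {R : ℝ}

theorem isOpen_setOf_snd_add_mul_norm_neg :
    IsOpen {p : K × ℝ | p.2 + R * ‖p.1‖ < 0} :=
  isOpen_lt (by fun_prop) continuous_const

variable [NormedSpace ℝ K]

theorem convex_setOf_snd_add_mul_norm_neg (hR : 0 ≤ R) :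
    Convex ℝ {p : K × ℝ | p.2 + R * ‖p.1‖ < 0} := by
  have hconv : ConvexOn ℝ Set.univ fun p : K × ℝ => p.2 + R * ‖p.1‖ :=
    ((LinearMap.snd ℝ K ℝ).convexOn convex_univ).add
      (((convexOn_norm convex_univ).comp_linearMap (LinearMap.fst ℝ K ℝ)).smul hR)
  simpa using hconv.convex_lt 0

theorem apply_mk_eq_add_mul (f : StrongDual ℝ (K × ℝ)) (k : K) (t : ℝ) :
    f (k, t) = f (k, 0) + t * f (0, 1) := by
  rw [← smul_eq_mul, ← map_smul, ← map_add]
  simp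

variable {f : StrongDual ℝ (K × ℝ)}

theorem pos_apply_zero_one_of_neg_on (hf : ∀ p : K × ℝ, p.2 + R * ‖p.1‖ < 0 → f p < 0) :
    0 < f (0, 1) := by
  have := hf (0, -1) (by simp)
  rw [apply_mk_eq_add_mul, Prod.mk_zero_zero, map_zero] at this
  linarith

theorem abs_apply_inl_le_of_neg_on (hf : ∀ p : K × ℝ, p.2 + R * ‖p.1‖ < 0 → f p < 0) (k : K) :
    |f (k, 0)| ≤ R * ‖k‖ * f (0, 1) := by
  have hs := pos_apply_zero_one_of_neg_on hf
  have apply_le (k : K) : f (k, 0) ≤ R * ‖k‖ * f (0, 1) := by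
    refine le_of_forall_gt_imp_ge_of_dense fun c hc => ?_
    have hmem : -(c / f (0, 1)) + R * ‖k‖ < 0 := by
      have : R * ‖k‖ < c / f (0, 1) := by rw [lt_div_iff₀ hs]; linarith
      linarith
    have := hf (k, -(c / f (0, 1))) hmem
    rw [apply_mk_eq_add_mul, neg_mul, div_mul_cancel₀ _ hs.ne'] at this
    linarith
  have := apply_le (-k)
  rw [show ((-k : K), (0 : ℝ)) = -(k, 0) by simp, map_neg, norm_neg] at this
  exact abs_le.2 ⟨by linarith, apply_le k⟩

theorem PointedCone.exists_dual_norm_le_of_neg_le_mul_norm {H : Type*} [AddCommGroup H]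
    [Module ℝ H] (P : PointedCone ℝ H) (φ : H →ₗ[ℝ] ℝ) (O : H →ₗ[ℝ] K) (hR : 0 ≤ R)
    (hφ : ∀ u ∈ P, -φ u ≤ R * ‖O u‖) :
    ∃ g : StrongDual ℝ K, ‖g‖ ≤ R ∧ ∀ u ∈ P, 0 ≤ φ u + g (O u) := by
  have hUA : Disjoint {p : K × ℝ | p.2 + R * ‖p.1‖ < 0} (P.map (O.prod φ)) := by
    refine Set.disjoint_right.2 ?_
    rintro _ ⟨u, hu, rfl⟩ hlt
    have := hφ u hu
    change φ u + R * ‖O u‖ < 0 at hlt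
    linarith
  obtain ⟨f, hfU, hfA⟩ := geometric_hahn_banach_open_pointedCone
    (convex_setOf_snd_add_mul_norm_neg hR) isOpen_setOf_snd_add_mul_norm_neg _ hUA
  have hs := pos_apply_zero_one_of_neg_on hfU
  set s := f (0, 1)
  refine ⟨s⁻¹ • f.comp (.inl ℝ K ℝ), ?_, fun u hu => ?_⟩
  · refine ContinuousLinearMap.opNorm_le_bound _ hR fun k => ?_
    rw [smul_apply, ContinuousLinearMap.comp_apply, smul_eq_mul, norm_mul,
      norm_inv, Real.norm_of_nonneg hs.le, Real.norm_eq_abs, inv_mul_le_iff₀ hs]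
    exact (abs_apply_inl_le_of_neg_on hfU k).trans_eq (mul_comm _ _)
  · have := hfA _ ⟨u, hu, rfl⟩
    change 0 ≤ f (O u, φ u) at this
    rw [apply_mk_eq_add_mul] at this
    simp only [smul_apply, ContinuousLinearMap.comp_apply,
      ContinuousLinearMap.inl_apply, smul_eq_mul]
    have hdiv : φ u + s⁻¹ * f (O u, 0) = s⁻¹ * (f (O u, 0) + φ u * s) := by
      field_simp
      ring
    rw [hdiv]
    exact mul_nonneg (inv_nonneg.2 hs.le) this

end NormCone

theorem stmt8_general {H K : Type*}
    [NormedAddCommGroup H] [InnerProductSpace ℝ H] [CompleteSpace H]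
    [NormedAddCommGroup K] [InnerProductSpace ℝ K] [CompleteSpace K]
    (L : H →L[ℝ] H) (O : H →L[ℝ] K) (C : ℝ) (hC : 0 < C)
    (V : Set H) (hVconv : Convex ℝ V) (hV0 : (0:H) ∈ V)
    (Vt : Set H) (hVt : ∀ u ∈ Vt, ∀ v ∈ V, u + v ∈ V)
    (hobs : ∀ u ∈ V, ‖L u‖ ≤ C * ‖O u‖) :
    ∀ y₀ : H, ∃ h : K, ‖h‖ ≤ C * ‖y₀‖ ∧
      ∀ u₀ ∈ Vt, 0 ≤ ⟪L.adjoint y₀ + O.adjoint h, u₀⟫ := by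
  intro y₀
  have hull_subset : (PointedCone.hull ℝ Vt : Set H) ⊆ V :=
    fun u hu => hVconv.recessionCone_subset hV0
      ((Submodule.span_le (p := hVconv.recessionCone)).2 hVt hu)
  have hbound (u : H) (hu : u ∈ PointedCone.hull ℝ Vt) :
      -⟪y₀, L u⟫ ≤ C * ‖y₀‖ * ‖O u‖ :=
    calc -⟪y₀, L u⟫ ≤ ‖y₀‖ * ‖L u‖ := (neg_le_abs _).trans (abs_real_inner_le_norm _ _)
      _ ≤ ‖y₀‖ * (C * ‖O u‖) := by gcongr; exact hobs u (hull_subset hu)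
      _ = C * ‖y₀‖ * ‖O u‖ := by ring
  obtain ⟨g, hg, hpos⟩ := PointedCone.exists_dual_norm_le_of_neg_le_mul_norm
    (PointedCone.hull ℝ Vt) ((innerSL ℝ y₀).comp L).toLinearMap O.toLinearMap
    (R := C * ‖y₀‖) (by positivity) hbound
  refine ⟨(InnerProductSpace.toDual ℝ K).symm g, by simpa using hg, fun u₀ hu₀ => ?_⟩
  rw [inner_add_left, ContinuousLinearMap.adjoint_inner_left,
    ContinuousLinearMap.adjoint_inner_left, InnerProductSpace.toDual_symm_apply]
  exact hpos u₀ (PointedCone.subset_hull hu₀)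

/-- Lemma 5.8 (abstract form): an observability inequality on a closed convex cone-like
set `𝒱` yields, for every `y₀`, a control `h` of norm at most `C‖y₀‖` such that
`L*y₀ + O*h` has nonnegative inner product with every element of `𝒱̃`. -/
theorem stmt8 {H K : Type*}
    [NormedAddCommGroup H] [InnerProductSpace ℝ H] [CompleteSpace H]
    [NormedAddCommGroup K] [InnerProductSpace ℝ K] [CompleteSpace K]
    (L : H →L[ℝ] H) (O : H →L[ℝ] K) (C : ℝ) (hC : 0 < C)
    (V : Set H) (hVclosed : IsClosed V) (hVconv : Convex ℝ V) (hV0 : (0:H) ∈ V)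
    (Vt : Set H) (hVtV : Vt ⊆ V) (hVt : ∀ u ∈ Vt, ∀ v ∈ V, u + v ∈ V)
    (hobs : ∀ u ∈ V, ‖L u‖ ≤ C * ‖O u‖) :
    ∀ y₀ : H, ∃ h : K, ‖h‖ ≤ C * ‖y₀‖ ∧
      ∀ u₀ ∈ Vt, 0 ≤ ⟪L.adjoint y₀ + O.adjoint h, u₀⟫ :=
  stmt8_general L O C hC V hVconv hV0 Vt hVt hobs
end

section
/- Let M be a compact metric space, ω ⊆ M a nonempty open set, a < b real numbers, and ν a Borel measure on M such that every nonempty open ball has positive ν-measure. Let F : M × M × [a,b] → ℝ be continuous and nonnegative, and assume that for every y ∈ M there exist x ∈ ω and t ∈ (a,b) with F(x,y,t) = 0. Then for every δ > 0 there exists C_δ > 0 such that for every y ∈ M there is an open set U_y ⊆ ω × (a,b) with (ν ⊗ λ)(U_y) ≥ C_δ (λ denoting Lebesgue measure on ℝ) and F(x,y,t) ≤ δ for all (x,t) ∈ U_y. -/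
/-!
Around a zero `(x₀, y₀, t₀)` of `F` with `x₀ ∈ ω`, `t₀ ∈ (a,b)`, continuity gives a box
`B(x₀,r) × B(y₀,r) × (t₀ - r, t₀ + r)` inside `ω × M × (a,b)` on which `F ≤ δ`; the slice
`B(x₀,r) × (t₀ - r, t₀ + r)` then serves every `y ∈ B(y₀,r)`, and its measure is positive because
`ν` charges balls. Compactness of `M` turns these local constants into a uniform one.
-/

open MeasureTheory Filter Topology Metric Set

theorem exists_pos_forall_of_forall_eventually {X : Type*} [TopologicalSpace X] [CompactSpace X]
    {P : X → ℝ → Prop} (hP : ∀ x, Antitone (P x)) (h : ∀ x, ∃ c > 0, ∀ᶠ y in 𝓝 x, P y c) :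
    ∃ c > 0, ∀ x, P x c := by
  suffices ∃ c > 0, ∀ x ∈ (univ : Set X), P x c by simpa using this
  refine isCompact_univ.induction_on ⟨1, one_pos, fun _ hx => hx.elim⟩ ?_ ?_ ?_
  · exact fun s t hst ⟨c, hc, hPt⟩ => ⟨c, hc, fun x hx => hPt x (hst hx)⟩
  · rintro s t ⟨c, hc, hPs⟩ ⟨d, hd, hPt⟩
    refine ⟨min c d, lt_min hc hd, ?_⟩
    rintro x (hx | hx)
    exacts [hP x (min_le_left c d) (hPs x hx), hP x (min_le_right c d) (hPt x hx)]
  · intro x _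
    obtain ⟨c, hc, hev⟩ := h x
    exact ⟨{y | P y c}, by rwa [nhdsWithin_univ], c, hc, fun _ hy => hy⟩

section SublevelSets

variable {M : Type*} [MetricSpace M] [MeasurableSpace M]

def HasLargeSublevelSet (ν : Measure M) (ω : Set M) (a b δ : ℝ) (f : M → ℝ → ℝ) (c : ℝ) :
    Prop :=
  ∃ U : Set (M × ℝ), IsOpen U ∧ U ⊆ ω ×ˢ Ioo a b ∧ ENNReal.ofReal c ≤ (ν.prod volume) U ∧
    ∀ p ∈ U, f p.1 p.2 ≤ δ

theorem antitone_hasLargeSublevelSet (ν : Measure M) (ω : Set M) (a b δ : ℝ)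
    (f : M → ℝ → ℝ) : Antitone (HasLargeSublevelSet ν ω a b δ f) :=
  fun _ _ hcd ⟨U, hU, hUsub, hmeas, hf⟩ =>
    ⟨U, hU, hUsub, (ENNReal.ofReal_le_ofReal hcd).trans hmeas, hf⟩

theorem eventually_hasLargeSublevelSet {ω : Set M} (hω : IsOpen ω) {a b δ : ℝ} {ν : Measure M}
    (hν : ∀ (x : M) (r : ℝ), 0 < r → 0 < ν (ball x r)) {F : M → M → ℝ → ℝ}
    (hFc : ContinuousOn (fun p : M × M × ℝ => F p.1 p.2.1 p.2.2) (univ ×ˢ univ ×ˢ Icc a b))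
    {x₀ y₀ : M} {t₀ : ℝ} (hx₀ : x₀ ∈ ω) (ht₀ : t₀ ∈ Ioo a b) (hδ : F x₀ y₀ t₀ < δ) :
    ∃ c > 0, ∀ᶠ y in 𝓝 y₀, HasLargeSublevelSet ν ω a b δ (F · y) c := by
  have hcont : ContinuousAt (fun p : M × M × ℝ => F p.1 p.2.1 p.2.2) (x₀, y₀, t₀) :=
    hFc.continuousAt (prod_mem_nhds univ_mem (prod_mem_nhds univ_mem (Icc_mem_nhds ht₀.1 ht₀.2)))
  have hev : ∀ᶠ p : M × M × ℝ in 𝓝 (x₀, y₀, t₀),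
      p.1 ∈ ω ∧ p.2.2 ∈ Ioo a b ∧ F p.1 p.2.1 p.2.2 < δ :=
    (continuous_fst.continuousAt.eventually_mem (hω.mem_nhds hx₀)).and
      ((continuous_snd.snd.continuousAt.eventually_mem (isOpen_Ioo.mem_nhds ht₀)).and
        (hcont.eventually (gt_mem_nhds hδ)))
  obtain ⟨r, hr, hbox⟩ := eventually_nhds_iff_ball.1 hev
  have hpos : 0 < (ν.prod volume) (ball x₀ r ×ˢ ball t₀ r) := by
    rw [Measure.prod_prod, Real.volume_ball]
    exact ENNReal.mul_pos (hν x₀ r hr).ne' (ENNReal.ofReal_pos.2 (by positivity)).ne'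
  obtain ⟨c, -, hc₀, hc⟩ := ENNReal.lt_iff_exists_real_btwn.1 hpos
  refine ⟨c, ENNReal.ofReal_pos.1 hc₀, ?_⟩
  filter_upwards [ball_mem_nhds y₀ hr] with y hy
  have hbox' : ∀ p ∈ ball x₀ r ×ˢ ball t₀ r, p.1 ∈ ω ∧ p.2 ∈ Ioo a b ∧ F p.1 y p.2 < δ := by
    rintro ⟨x, t⟩ ⟨hx, ht⟩
    exact hbox (x, y, t) (by rw [← ball_prod_same, ← ball_prod_same]; exact ⟨hx, hy, ht⟩)
  exact ⟨_, isOpen_ball.prod isOpen_ball, fun p hp => ⟨(hbox' p hp).1, (hbox' p hp).2.1⟩, hc.le,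
    fun p hp => (hbox' p hp).2.2.le⟩

end SublevelSets

theorem stmt9_general {M : Type*} [MetricSpace M] [CompactSpace M]
    [MeasurableSpace M]
    (ω : Set M) (hω : IsOpen ω)
    (a b : ℝ)
    (ν : Measure M)
    (hν : ∀ (x : M) (r : ℝ), 0 < r → 0 < ν (Metric.ball x r))
    (F : M → M → ℝ → ℝ)
    (hFc : ContinuousOn (fun p : M × M × ℝ => F p.1 p.2.1 p.2.2)
      (Set.univ ×ˢ Set.univ ×ˢ Set.Icc a b))
    (hGCC : ∀ y : M, ∃ x ∈ ω, ∃ t ∈ Set.Ioo a b, F x y t = 0) :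
    ∀ δ > 0, ∃ Cδ > 0, ∀ y : M, ∃ U : Set (M × ℝ),
      IsOpen U ∧ U ⊆ ω ×ˢ Set.Ioo a b ∧
      ENNReal.ofReal Cδ ≤ (ν.prod volume) U ∧
      ∀ p ∈ U, F p.1 y p.2 ≤ δ := by
  intro δ hδ
  refine exists_pos_forall_of_forall_eventually
    (fun y => antitone_hasLargeSublevelSet ν ω a b δ (F · y)) fun y₀ => ?_
  obtain ⟨x₀, hx₀, t₀, ht₀, hzero⟩ := hGCC y₀
  exact eventually_hasLargeSublevelSet hω hν hFc hx₀ ht₀ (hzero.trans_lt hδ)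

/-- Lemma 5.7 (abstract form): if a continuous nonnegative cost `F` vanishes, for
every `y`, at some point of the observation region `ω × (a,b)`, then for every
`δ > 0` there is a uniform constant `C_δ > 0` such that, for every `y`, the cost is
at most `δ` on an open subset of `ω × (a,b)` of product measure at least `C_δ`. -/
theorem stmt9 {M : Type*} [MetricSpace M] [CompactSpace M]
    [MeasurableSpace M] [BorelSpace M]
    (ω : Set M) (hω : IsOpen ω) (hωne : ω.Nonempty)
    (a b : ℝ) (hab : a < b)
    (ν : Measure M)
    (hν : ∀ (x : M) (r : ℝ), 0 < r → 0 < ν (Metric.ball x r))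
    (F : M → M → ℝ → ℝ)
    (hFc : ContinuousOn (fun p : M × M × ℝ => F p.1 p.2.1 p.2.2)
      (Set.univ ×ˢ Set.univ ×ˢ Set.Icc a b))
    (hF0 : ∀ x y : M, ∀ t ∈ Set.Icc a b, 0 ≤ F x y t)
    (hGCC : ∀ y : M, ∃ x ∈ ω, ∃ t ∈ Set.Ioo a b, F x y t = 0) :
    ∀ δ > 0, ∃ Cδ > 0, ∀ y : M, ∃ U : Set (M × ℝ),
      IsOpen U ∧ U ⊆ ω ×ˢ Set.Ioo a b ∧
      ENNReal.ofReal Cδ ≤ (ν.prod volume) U ∧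
      ∀ p ∈ U, F p.1 y p.2 ≤ δ :=
  stmt9_general ω hω a b ν hν F hFc hGCC
end

section
/- Let n ≥ 1, λ ≥ 0, T ≥ 0, and let γ : [0,T] → ℝⁿ be differentiable with γᵢ'(t) = −√(λ² γᵢ(t)² + 1) for every coordinate i ∈ {1,…,n} and every t ∈ [0,T]. Then for every v ∈ ℝⁿ with |v| = 1 and vᵢ ≥ 0 for all i, one has ⟨γ(T), v⟩ ≤ ⟨γ(0), v⟩ − T. Consequently, if Ω ⊆ ℝⁿ is bounded, γ(0) ∈ Ω̄, and T > sup_{z∈Ω̄} ⟨z, v⟩ − inf_{z∈Ω̄} ⟨z, v⟩ for some such v, then γ(T) ∉ Ω̄. -/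
/-! Along `γ` the functional `z ↦ ⟨z, v⟩` has derivative `-∑ᵢ √(λ²γᵢ² + 1) vᵢ ≤ -∑ᵢ vᵢ ≤ -|v| = -1`,
so by the mean value inequality it drops by at least `T`. On the compact set `Ω̄` it varies by at
most the width `sup - inf`, so a drop larger than the width forces `γ T ∉ Ω̄`. -/

open Set Finset

lemma one_le_sum_of_sum_sq_eq_one {ι : Type*} (s : Finset ι) {v : ι → ℝ}
    (hv : ∀ i ∈ s, 0 ≤ v i) (hv1 : ∑ i ∈ s, v i ^ 2 = 1) : 1 ≤ ∑ i ∈ s, v i := by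
  have h : 1 ≤ (∑ i ∈ s, v i) ^ 2 := hv1 ▸ sum_sq_le_sq_sum_of_nonneg hv
  nlinarith [sum_nonneg hv]

lemma sum_neg_sqrt_mul_le_neg_one {ι : Type*} [Fintype ι] (lam : ℝ) (x v : ι → ℝ)
    (hv : ∀ i, 0 ≤ v i) (hv1 : ∑ i, v i ^ 2 = 1) :
    ∑ i, -Real.sqrt (lam ^ 2 * x i ^ 2 + 1) * v i ≤ -1 := by
  have hspeed : ∑ i, v i ≤ ∑ i, Real.sqrt (lam ^ 2 * x i ^ 2 + 1) * v i := by
    refine sum_le_sum fun i _ => le_mul_of_one_le_left (hv i) ?_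
    exact Real.one_le_sqrt.2 (le_add_of_nonneg_left (by positivity))
  have hv_sum := one_le_sum_of_sum_sq_eq_one univ (fun i _ => hv i) hv1
  simp only [neg_mul, sum_neg_distrib]
  linarith

lemma sub_le_mul_sub_of_hasDerivWithinAt_Icc {f f' : ℝ → ℝ} {a b C : ℝ} (hab : a ≤ b)
    (hf : ∀ t ∈ Icc a b, HasDerivWithinAt f (f' t) (Icc a b) t)
    (hf' : ∀ t ∈ Icc a b, f' t ≤ C) : f b - f a ≤ C * (b - a) := by
  have hderiv : ∀ t ∈ interior (Icc a b), HasDerivAt f (f' t) t := by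
    intro t ht
    rw [interior_Icc] at ht
    exact (hf t (Ioo_subset_Icc_self ht)).hasDerivAt (Icc_mem_nhds ht.1 ht.2)
  refine (convex_Icc a b).image_sub_le_mul_sub_of_deriv_le
    (fun t ht => (hf t ht).continuousWithinAt)
    (fun t ht => (hderiv t ht).differentiableAt.differentiableWithinAt)
    (fun t ht => ?_) a (left_mem_Icc.2 hab) b (right_mem_Icc.2 hab) hab
  rw [(hderiv t ht).deriv]
  exact hf' t (interior_subset ht)

lemma sub_le_sSup_image_sub_sInf_image {E : Type*} [TopologicalSpace E] {φ : E → ℝ}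
    (hφ : Continuous φ) {K : Set E} (hK : IsCompact K) {x y : E} (hx : x ∈ K) (hy : y ∈ K) :
    φ x - φ y ≤ sSup (φ '' K) - sInf (φ '' K) :=
  sub_le_sub (le_csSup (hK.bddAbove_image hφ.continuousOn) (mem_image_of_mem φ hx))
    (csInf_le (hK.bddBelow_image hφ.continuousOn) (mem_image_of_mem φ hy))

theorem stmt11_general (n : ℕ) (lam T : ℝ) (hT : 0 ≤ T)
    (γ : ℝ → Fin n → ℝ)
    (hγ : ∀ (i : Fin n), ∀ t ∈ Set.Icc (0:ℝ) T,
      HasDerivWithinAt (fun s => γ s i)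
        (-Real.sqrt (lam^2 * (γ t i)^2 + 1)) (Set.Icc 0 T) t)
    (v : Fin n → ℝ) (hv1 : ∑ i, (v i)^2 = 1) (hv2 : ∀ i, 0 ≤ v i) :
    (∑ i, γ T i * v i ≤ ∑ i, γ 0 i * v i - T) ∧
    (∀ Ω : Set (Fin n → ℝ), Bornology.IsBounded Ω → γ 0 ∈ closure Ω →
      sSup ((fun z => ∑ i, z i * v i) '' closure Ω) -
        sInf ((fun z => ∑ i, z i * v i) '' closure Ω) < T →
      γ T ∉ closure Ω) := by
  have hdrift : ∑ i, γ T i * v i - ∑ i, γ 0 i * v i ≤ -1 * (T - 0) :=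
    sub_le_mul_sub_of_hasDerivWithinAt_Icc (f := fun t => ∑ i, γ t i * v i) hT
      (fun t ht => HasDerivWithinAt.fun_sum fun i _ => (hγ i t ht).mul_const (v i))
      (fun t _ => sum_neg_sqrt_mul_le_neg_one lam (γ t) v hv2 hv1)
  refine ⟨by linarith, fun Ω hΩ h0 hwidth hTΩ => ?_⟩
  have hspread := sub_le_sSup_image_sub_sInf_image
    (φ := fun z : Fin n → ℝ => ∑ i, z i * v i) (by fun_prop) hΩ.isCompact_closure h0 hTΩ
  linarith

/-- Lemma 3.9 (coordinate form): an integral curve of `-∇f_λ`, where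
`∂ᵢf_λ(x) = √(λ²xᵢ² + 1)`, drifts with speed at least `1` in any unit direction `v`
with nonnegative coordinates; consequently it leaves the closure of any bounded set
`Ω` after time exceeding the width of `Ω` in the direction `v`. -/
theorem stmt11 (n : ℕ) (hn : 1 ≤ n) (lam T : ℝ) (hlam : 0 ≤ lam) (hT : 0 ≤ T)
    (γ : ℝ → Fin n → ℝ)
    (hγ : ∀ (i : Fin n), ∀ t ∈ Set.Icc (0:ℝ) T,
      HasDerivWithinAt (fun s => γ s i)
        (-Real.sqrt (lam^2 * (γ t i)^2 + 1)) (Set.Icc 0 T) t)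
    (v : Fin n → ℝ) (hv1 : ∑ i, (v i)^2 = 1) (hv2 : ∀ i, 0 ≤ v i) :
    (∑ i, γ T i * v i ≤ ∑ i, γ 0 i * v i - T) ∧
    (∀ Ω : Set (Fin n → ℝ), Bornology.IsBounded Ω → γ 0 ∈ closure Ω →
      sSup ((fun z => ∑ i, z i * v i) '' closure Ω) -
        sInf ((fun z => ∑ i, z i * v i) '' closure Ω) < T →
      γ T ∉ closure Ω) :=
  stmt11_general n lam T hT γ hγ v hv1 hv2
end

section
/- Let L > 0, c > 0, s₁ ∈ (0, L), C₁ > 0. Let R : (0,L) → (0,∞) be continuous with |R(s) − s| ≤ C₁ s³ for all s ∈ (0, s₁], and let w : (0,L) → [0,∞) be continuous and bounded. Define V(s) := c²/R(s)² + w(s), and assume V attains a global minimum over (0,L) at a point s_min ∈ (0,L), with minimal value E₀. For s ∈ (0, s_min], set d_A(s) := ∫_s^{s_min} √(V(y) − E₀) dy. Then there exist C > 0 and s₀ ∈ (0, s_min) such that |d_A(s) + c · log s| ≤ C for all s ∈ (0, s₀]. -/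
/-!
Near the pole `R y = y + O(y³)`, so `c / R y = c / y + O(y)`, and since
`|√x - √y| ≤ √|x - y|` for all reals, the bounded term `w - E₀` moves the square root by at
most a constant; hence `√(V y - E₀) = c / y + O(1)` on some `(0, s₀]`. Integrating, the part of
`d_A(s)` over `[s, s₀]` is `c (log s₀ - log s) + O(1)`, and the part over `[s₀, s_min]` is a
constant.
-/

open MeasureTheory Set Filter Topology

theorem Real.abs_sqrt_sub_sqrt_le (x y : ℝ) : |√x - √y| ≤ √|x - y| := by
  have key : ∀ x y : ℝ, √x ≤ √y + √|x - y| := fun x y ↦ by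
    refine Real.sqrt_le_iff.mpr ⟨by positivity, ?_⟩
    nlinarith [Real.sq_sqrt' (x := y), le_max_left y 0, Real.sq_sqrt (abs_nonneg (x - y)),
      le_abs_self (x - y), mul_nonneg (Real.sqrt_nonneg y) (Real.sqrt_nonneg |x - y|)]
  rw [abs_sub_le_iff]
  constructor
  · linarith [key x y]
  · linarith [abs_sub_comm x y ▸ key y x]

theorem abs_inv_sub_inv_le_of_abs_sub_le {r y C : ℝ} (hy : 0 < y) (hr : |r - y| ≤ C * y ^ 3)
    (hCy : C * y ^ 2 ≤ 1 / 2) : |r⁻¹ - y⁻¹| ≤ 2 * C * y := by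
  have hr_half : y / 2 ≤ r := by nlinarith [neg_abs_le (r - y)]
  have hr_pos : 0 < r := by linarith
  rw [inv_sub_inv hr_pos.ne' hy.ne', abs_div, abs_sub_comm, abs_of_pos (mul_pos hr_pos hy),
    div_le_iff₀ (by positivity)]
  calc |r - y| ≤ C * y ^ 3 := hr
    _ ≤ 2 * C * y * (r * y) := by nlinarith [abs_nonneg (r - y)]

theorem abs_integral_add_mul_log_le {f : ℝ → ℝ} {c M s₀ b s : ℝ} (hs₀b : s₀ ≤ b)
    (hf : ContinuousOn f (Ioc 0 b)) (hM : ∀ y ∈ Ioc 0 s₀, |f y - c / y| ≤ M)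
    (hs : s ∈ Ioc 0 s₀) :
    |(∫ z in s..b, f z) + c * Real.log s|
      ≤ M * s₀ + |c * Real.log s₀| + |∫ z in s₀..b, f z| := by
  obtain ⟨hs_pos, hss₀⟩ := hs
  have hs₀ : 0 < s₀ := hs_pos.trans_le hss₀
  have hM_nonneg : 0 ≤ M := (abs_nonneg _).trans (hM s₀ ⟨hs₀, le_rfl⟩)
  have hf_int : ∀ a ∈ Ioc 0 b, IntervalIntegrable f volume a b := fun a ha ↦
    (hf.mono fun z hz ↦ by
      rw [uIcc_of_le ha.2] at hz
      exact ⟨ha.1.trans_le hz.1, hz.2⟩).intervalIntegrable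
  have hzero : (0 : ℝ) ∉ uIcc s s₀ := by
    rw [uIcc_of_le hss₀]
    exact fun h ↦ hs_pos.not_ge h.1
  have hinv_int : IntervalIntegrable (fun z ↦ c / z) volume s s₀ :=
    (continuousOn_const.div continuousOn_id fun z hz ↦
      ne_of_mem_of_not_mem hz hzero).intervalIntegrable
  have hf_int' : IntervalIntegrable f volume s s₀ :=
    (hf_int s ⟨hs_pos, hss₀.trans hs₀b⟩).mono_set (by
      rw [uIcc_of_le hss₀, uIcc_of_le (hss₀.trans hs₀b)]; exact Icc_subset_Icc_right hs₀b)
  have hlog : ∫ z in s..s₀, c / z = c * (Real.log s₀ - Real.log s) := by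
    simp only [div_eq_mul_one_div c, intervalIntegral.integral_const_mul, integral_one_div hzero,
      Real.log_div hs₀.ne' hs_pos.ne']
  have herr : |∫ z in s..s₀, (f z - c / z)| ≤ M * s₀ := by
    have := intervalIntegral.norm_integral_le_of_norm_le_const (a := s) (b := s₀)
      (f := fun z ↦ f z - c / z) fun z hz ↦ by
        rw [uIoc_of_le hss₀] at hz
        exact hM z ⟨hs_pos.trans hz.1, hz.2⟩
    rw [Real.norm_eq_abs, abs_of_nonneg (sub_nonneg.mpr hss₀)] at this
    exact this.trans (by nlinarith)
  have hsplit : (∫ z in s..b, f z) + c * Real.log s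
      = (∫ z in s..s₀, (f z - c / z)) + c * Real.log s₀ + ∫ z in s₀..b, f z := by
    rw [← intervalIntegral.integral_add_adjacent_intervals hf_int' (hf_int s₀ ⟨hs₀, hs₀b⟩),
      intervalIntegral.integral_sub hf_int' hinv_int, hlog]
    ring
  rw [hsplit]
  calc _ ≤ |∫ z in s..s₀, (f z - c / z)| + |c * Real.log s₀| + |∫ z in s₀..b, f z| :=
        (abs_add_le _ _).trans (add_le_add_left (abs_add_le _ _) _)
    _ ≤ _ := by gcongr

theorem abs_sqrt_potential_sub_le {c r w E y C : ℝ} (hc : 0 ≤ c) (hy : 0 < y)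
    (hr : |r - y| ≤ C * y ^ 3) (hCy : C * y ^ 2 ≤ 1 / 2) :
    |√(c ^ 2 / r ^ 2 + w - E) - c / y| ≤ √|w - E| + c * (2 * C * y) := by
  have hr_pos : 0 < r := by nlinarith [neg_abs_le (r - y)]
  have hsq : √(c ^ 2 / r ^ 2) = c / r := by
    rw [← div_pow, Real.sqrt_sq (by positivity)]
  have hsqrt : |√(c ^ 2 / r ^ 2 + w - E) - c / r| ≤ √|w - E| := by
    have := Real.abs_sqrt_sub_sqrt_le (c ^ 2 / r ^ 2 + w - E) (c ^ 2 / r ^ 2)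
    rwa [hsq, add_sub_assoc, add_sub_cancel_left, ← add_sub_assoc] at this
  have hinv : |c / r - c / y| ≤ c * (2 * C * y) := by
    rw [div_eq_mul_inv, div_eq_mul_inv, ← mul_sub, abs_mul, abs_of_nonneg hc]
    exact mul_le_mul_of_nonneg_left (abs_inv_sub_inv_le_of_abs_sub_le hy hr hCy) hc
  calc _ ≤ |√(c ^ 2 / r ^ 2 + w - E) - c / r| + |c / r - c / y| := abs_sub_le _ _ _
    _ ≤ _ := add_le_add hsqrt hinv

theorem stmt13_general (L c s₁ C₁ : ℝ) (hc : 0 < c)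
    (hs₁ : s₁ ∈ Set.Ioo 0 L) (hC₁ : 0 < C₁)
    (R w : ℝ → ℝ)
    (hRc : ContinuousOn R (Set.Ioo 0 L))
    (hRpos : ∀ s ∈ Set.Ioo (0:ℝ) L, 0 < R s)
    (hRs : ∀ s ∈ Set.Ioc (0:ℝ) s₁, |R s - s| ≤ C₁ * s^3)
    (hwc : ContinuousOn w (Set.Ioo 0 L))
    (hw0 : ∀ s ∈ Set.Ioo (0:ℝ) L, 0 ≤ w s)
    (hwb : ∃ B : ℝ, ∀ s ∈ Set.Ioo (0:ℝ) L, w s ≤ B)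
    (smin : ℝ) (hsmin : smin ∈ Set.Ioo 0 L) :
    ∃ C > 0, ∃ s₀ ∈ Set.Ioo (0:ℝ) smin, ∀ s ∈ Set.Ioc (0:ℝ) s₀,
      |(∫ z in s..smin,
          Real.sqrt ((c^2/(R z)^2 + w z) - (c^2/(R smin)^2 + w smin)))
        + c * Real.log s| ≤ C := by
  obtain ⟨B, hB⟩ := hwb
  set E₀ := c ^ 2 / R smin ^ 2 + w smin
  have hsmall : ∀ᶠ y in 𝓝 (0 : ℝ), y < smin ∧ y ≤ s₁ ∧ C₁ * y ^ 2 < 1 / 2 :=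
    (eventually_lt_nhds hsmin.1).and <| (eventually_le_nhds hs₁.1).and <|
      ContinuousAt.eventually_lt (by fun_prop) continuousAt_const (by norm_num)
  obtain ⟨s₀, ⟨hs₀smin, hs₀s₁, hs₀C₁⟩, hs₀⟩ :=
    ((hsmall.filter_mono nhdsWithin_le_nhds).and (self_mem_nhdsWithin (s := Ioi 0))).exists
  have hIoc : ∀ {a}, a ≤ smin → Ioc 0 a ⊆ Ioo 0 L := fun ha y hy ↦
    ⟨hy.1, hy.2.trans_lt (ha.trans_lt hsmin.2)⟩
  have hcont : ContinuousOn (fun z ↦ √(c ^ 2 / R z ^ 2 + w z - E₀)) (Ioc 0 smin) :=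
    ((continuousOn_const.div (hRc.pow 2) fun z hz ↦ pow_ne_zero 2 (hRpos z hz).ne').add
      hwc |>.sub continuousOn_const).sqrt.mono (hIoc le_rfl)
  have hbound : ∀ y ∈ Ioc 0 s₀, |√(c ^ 2 / R y ^ 2 + w y - E₀) - c / y|
      ≤ √(B + |E₀|) + c * (2 * C₁ * s₀) := fun y hy ↦ by
    have hyL := hIoc hs₀smin.le hy
    have hw : |w y - E₀| ≤ B + |E₀| :=
      (abs_sub _ _).trans (by rw [abs_of_nonneg (hw0 y hyL)]; linarith [hB y hyL])
    refine (abs_sqrt_potential_sub_le hc.le hy.1 (hRs y ⟨hy.1, hy.2.trans hs₀s₁⟩)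
      (by nlinarith [mul_le_mul_of_nonneg_left (pow_le_pow_left₀ hy.1.le hy.2 2) hC₁.le])
      ).trans ?_
    gcongr
    exact hy.2
  exact ⟨_, add_pos_of_nonneg_of_pos (by positivity) one_pos, s₀, ⟨hs₀, hs₀smin⟩,
    fun s hs ↦ (abs_integral_add_mul_log_le hs₀smin.le hcont hbound hs).trans
      (le_add_of_nonneg_right zero_le_one)⟩

/-- Lemma 4.2, equation (4.6): for the effective potential `V(s) = c²/R(s)² + w(s)`
with `R(s) = s + O(s³)` near `0` and `w` bounded, the Agmon distance to the unique
potential minimum satisfies `d_A(s) = -c log s + O(1)` as `s → 0⁺`. -/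
theorem stmt13 (L c s₁ C₁ : ℝ) (hL : 0 < L) (hc : 0 < c)
    (hs₁ : s₁ ∈ Set.Ioo 0 L) (hC₁ : 0 < C₁)
    (R w : ℝ → ℝ)
    (hRc : ContinuousOn R (Set.Ioo 0 L))
    (hRpos : ∀ s ∈ Set.Ioo (0:ℝ) L, 0 < R s)
    (hRs : ∀ s ∈ Set.Ioc (0:ℝ) s₁, |R s - s| ≤ C₁ * s^3)
    (hwc : ContinuousOn w (Set.Ioo 0 L))
    (hw0 : ∀ s ∈ Set.Ioo (0:ℝ) L, 0 ≤ w s)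
    (hwb : ∃ B : ℝ, ∀ s ∈ Set.Ioo (0:ℝ) L, w s ≤ B)
    (smin : ℝ) (hsmin : smin ∈ Set.Ioo 0 L)
    (hmin : ∀ s ∈ Set.Ioo (0:ℝ) L,
      c^2/(R smin)^2 + w smin ≤ c^2/(R s)^2 + w s) :
    ∃ C > 0, ∃ s₀ ∈ Set.Ioo (0:ℝ) smin, ∀ s ∈ Set.Ioc (0:ℝ) s₀,
      |(∫ z in s..smin,
          Real.sqrt ((c^2/(R z)^2 + w z) - (c^2/(R smin)^2 + w smin)))
        + c * Real.log s| ≤ C :=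
  stmt13_general L c s₁ C₁ hc hs₁ hC₁ R w hRc hRpos hRs hwc hw0 hwb smin hsmin
end

section
/- Let a < b be real numbers, ε > 0, μ ∈ ℝ, r₀ > 0 and c₀ > 0. Let R : [a,b] → ℝ be C¹ with R(z) ≥ r₀ for all z; let V : [a,b] → ℝ be C¹ with V(z) − μ ≥ c₀ for all z; and let q : [a,b] → ℝ be continuous. Let φ : [a,b] → ℂ be C² and satisfy −ε² (R(z) φ'(z))'/R(z) + (V(z) + ε q(z)) φ(z) = μ φ(z) on [a,b]. Define E⁺(z) := ε² |φ'(z)|² + (V(z) − μ) |φ(z)|², and set C₀ := (sup_{[a,b]} |V'|)/c₀ + 2 (sup_{[a,b]} |R'|)/r₀ + (sup_{[a,b]} |q|) (1 + 1/c₀). Then for all s, t ∈ [a,b]: E⁺(t) ≤ E⁺(s) · exp( (2/ε) |∫_s^t √(V(z) − μ) dz| + C₀ |t − s| ). -/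
/-!
Differentiating `E⁺ = ε²‖φ'‖² + (V - μ)‖φ‖²` and eliminating `φ''` with the equation gives
`(E⁺)' = (4(V - μ) + 2εq)⟪φ, φ'⟫ - 2ε²(R'/R)‖φ'‖² + V'‖φ‖²`. The leading term is controlled
by `2ε √(V - μ) ‖φ‖‖φ'‖ ≤ E⁺`, so `|(E⁺)'| ≤ ((2/ε)√(V - μ) + C₀) E⁺`, and Grönwall's inequality,
run in both directions, gives the claim.
-/

open MeasureTheory Set intervalIntegral Real
open scoped RealInnerProductSpace

section Gronwall

variable {a b : ℝ} {E E' g : ℝ → ℝ}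

theorem antitoneOn_mul_exp_neg_integral (hg : ContinuousOn g (Icc a b))
    (hE : ∀ z ∈ Icc a b, HasDerivWithinAt E (E' z) (Icc a b) z)
    (hbd : ∀ z ∈ Icc a b, E' z ≤ g z * E z) :
    AntitoneOn (fun x => E x * exp (-∫ y in a..x, g y)) (Icc a b) := by
  have hG : ∀ z ∈ Icc a b, HasDerivWithinAt (fun x => ∫ y in a..x, g y) (g z) (Icc a b) z := by
    intro z hz
    have : Fact (z ∈ Icc a b) := ⟨hz⟩
    exact integral_hasDerivWithinAt_right
      ((hg.mono (uIcc_subset_Icc (left_mem_Icc.2 (hz.1.trans hz.2)) hz)).intervalIntegrable)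
      (hg.stronglyMeasurableAtFilter_nhdsWithin measurableSet_Icc z) (hg z hz)
  have hderiv : ∀ z ∈ Icc a b, HasDerivWithinAt (fun x => E x * exp (-∫ y in a..x, g y))
      ((E' z - g z * E z) * exp (-∫ y in a..z, g y)) (Icc a b) z := fun z hz =>
    ((hE z hz).mul (hG z hz).neg.exp).congr_deriv (by simp only [Pi.neg_apply]; ring)
  refine antitoneOn_of_hasDerivWithinAt_nonpos (convex_Icc a b)
    (fun x hx => (hderiv x hx).continuousWithinAt)
    (fun x hx => (hderiv x (interior_subset hx)).mono interior_subset) fun x hx => ?_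
  exact mul_nonpos_of_nonpos_of_nonneg (sub_nonpos.2 (hbd x (interior_subset hx))) (exp_nonneg _)

theorem le_mul_exp_sub_of_mul_exp_le {x y u v : ℝ} (h : x * exp u ≤ y * exp v) :
    x ≤ y * exp (v - u) := by
  rwa [exp_sub, mul_div_assoc', le_div_iff₀ (exp_pos u)]

theorem le_mul_exp_abs_integral_of_abs_deriv_le (hg : ContinuousOn g (Icc a b))
    (hg0 : ∀ z ∈ Icc a b, 0 ≤ g z)
    (hE : ∀ z ∈ Icc a b, HasDerivWithinAt E (E' z) (Icc a b) z)
    (hbd : ∀ z ∈ Icc a b, |E' z| ≤ g z * E z) {s t : ℝ} (hs : s ∈ Icc a b) (ht : t ∈ Icc a b) :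
    E t ≤ E s * exp |∫ z in s..t, g z| := by
  have hint : ∀ u ∈ Icc a b, IntervalIntegrable g volume a u := fun u hu =>
    (hg.mono (uIcc_subset_Icc (left_mem_Icc.2 (hu.1.trans hu.2)) hu)).intervalIntegrable
  have hnonneg : ∀ {u v}, u ∈ Icc a b → v ∈ Icc a b → u ≤ v → 0 ≤ ∫ z in u..v, g z :=
    fun hu hv huv => integral_nonneg huv fun z hz => hg0 z (Icc_subset_Icc hu.1 hv.2 hz)
  rcases le_total s t with hst | hts
  · have h := antitoneOn_mul_exp_neg_integral hg hE (fun z hz => (le_abs_self _).trans (hbd z hz))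
      hs ht hst
    have := le_mul_exp_sub_of_mul_exp_le h
    rwa [neg_sub_neg, integral_interval_sub_left (hint t ht) (hint s hs),
      ← abs_of_nonneg (hnonneg hs ht hst)] at this
  · -- `E · exp (∫ g)` increases: apply the same to `-E` and `-g`
    have hbd' : ∀ z ∈ Icc a b, -E' z ≤ -g z * -E z := fun z hz => by
      rw [neg_mul_neg]; exact neg_le.1 (neg_le_of_abs_le (hbd z hz))
    have h := antitoneOn_mul_exp_neg_integral (E := -E) (E' := -E') hg.neg
      (fun z hz => (hE z hz).neg) hbd' ht hs hts
    simp only [Pi.neg_apply, intervalIntegral.integral_neg, neg_neg, neg_mul, neg_le_neg_iff] at h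
    have := le_mul_exp_sub_of_mul_exp_le h
    rwa [integral_interval_sub_left (hint s hs) (hint t ht), ← abs_of_nonneg (hnonneg ht hs hts),
      ← abs_neg, ← integral_symm] at this

end Gronwall

theorem abs_integral_const_mul_add_const {f : ℝ → ℝ} {s t α C : ℝ} (hα : 0 ≤ α) (hC : 0 ≤ C)
    (hf : IntervalIntegrable f volume s t) (hf0 : ∀ z ∈ uIcc s t, 0 ≤ f z) :
    |∫ z in s..t, (α * f z + C)| = α * |∫ z in s..t, f z| + C * |t - s| := by
  rw [integral_add (hf.const_mul α) intervalIntegrable_const, intervalIntegral.integral_const_mul,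
    intervalIntegral.integral_const, smul_eq_mul, (abs_add_eq_add_abs_iff _ _).2 ?_, abs_mul,
    abs_mul, abs_of_nonneg hα, abs_of_nonneg hC, mul_comm C]
  rcases le_total s t with hst | hts
  · have hI : 0 ≤ ∫ z in s..t, f z := integral_nonneg hst fun z hz => hf0 z (Icc_subset_uIcc hz)
    exact Or.inl ⟨mul_nonneg hα hI, mul_nonneg (sub_nonneg.2 hst) hC⟩
  · have hI : 0 ≤ ∫ z in t..s, f z := integral_nonneg hts fun z hz => hf0 z (Icc_subset_uIcc' hz)
    rw [integral_symm] at hI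
    exact Or.inr ⟨mul_nonpos_of_nonneg_of_nonpos hα (neg_nonneg.1 hI),
      mul_nonpos_of_nonpos_of_nonneg (sub_nonpos.2 hts) hC⟩

theorem abs_le_sSup_image_abs {X : Type*} [TopologicalSpace X] {f : X → ℝ} {s : Set X}
    (hs : IsCompact s) (hf : ContinuousOn f s) {z : X} (hz : z ∈ s) :
    |f z| ≤ sSup ((fun z => |f z|) '' s) :=
  le_csSup (hs.image_of_continuousOn hf.abs).bddAbove ⟨z, hz, rfl⟩

theorem sSup_image_abs_nonneg {X : Type*} (f : X → ℝ) (s : Set X) :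
    0 ≤ sSup ((fun z => |f z|) '' s) :=
  Real.sSup_nonneg (by rintro _ ⟨z, -, rfl⟩; exact abs_nonneg _)

theorem sq_smul_eq_of_eigen_equation {ε μ r r' v w : ℝ} {u u' u'' : ℂ} (hr : r ≠ 0)
    (h : -(ε : ℂ) ^ 2 * ((r' * u' + r * u'') / r) + (v + ε * w) * u = μ * u) :
    ε ^ 2 • u'' = (v - μ + ε * w) • u - (ε ^ 2 * (r' / r)) • u' := by
  have hr' : (r : ℂ) ≠ 0 := by exact_mod_cast hr
  simp only [Complex.real_smul]
  push_cast
  field_simp at h ⊢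
  linear_combination -h

section Energy

variable {F : Type*} [NormedAddCommGroup F] [InnerProductSpace ℝ F]

def semiclassicalEnergy (ε μ : ℝ) (V : ℝ → ℝ) (φ φ' : ℝ → F) (z : ℝ) : ℝ :=
  ε ^ 2 * ‖φ' z‖ ^ 2 + (V z - μ) * ‖φ z‖ ^ 2

theorem hasDerivWithinAt_semiclassicalEnergy {ε μ V'z Q ρ : ℝ} {V : ℝ → ℝ} {φ φ' : ℝ → F}
    {φ''z : F} {S : Set ℝ} {z : ℝ} (hV : HasDerivWithinAt V V'z S z)
    (hφ : HasDerivWithinAt φ (φ' z) S z) (hφ' : HasDerivWithinAt φ' φ''z S z)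
    (hode : ε ^ 2 • φ''z = (V z - μ + ε * Q) • φ z - (ε ^ 2 * ρ) • φ' z) :
    HasDerivWithinAt (semiclassicalEnergy ε μ V φ φ')
      ((4 * (V z - μ) + 2 * ε * Q) * ⟪φ z, φ' z⟫ - 2 * ε ^ 2 * ρ * ‖φ' z‖ ^ 2
        + V'z * ‖φ z‖ ^ 2) S z := by
  refine ((hφ'.norm_sq.const_mul (ε ^ 2)).add ((hV.sub_const μ).mul hφ.norm_sq)).congr_deriv ?_
  have h := congrArg (fun v => ⟪φ' z, v⟫) hode
  simp only [inner_smul_right, inner_sub_right, real_inner_self_eq_norm_sq,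
    real_inner_comm (φ z)] at h
  linear_combination 2 * h

end Energy

theorem abs_energy_deriv_le {ε c₀ U Q ρ W X p w MQ Mρ MW : ℝ} (hε : 0 < ε) (hc₀ : 0 < c₀)
    (hU : c₀ ≤ U) (hX : |X| ≤ w * p) (hQ : |Q| ≤ MQ) (hρ : |ρ| ≤ Mρ) (hW : |W| ≤ MW) :
    |(4 * U + 2 * ε * Q) * X - 2 * ε ^ 2 * ρ * p ^ 2 + W * w ^ 2| ≤
      (2 / ε * √U + (MW / c₀ + 2 * Mρ + MQ * (1 + 1 / c₀))) * (ε ^ 2 * p ^ 2 + U * w ^ 2) := by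
  have hU0 : 0 < U := hc₀.trans_le hU
  have hσ : √U ^ 2 = U := sq_sqrt hU0.le
  have hMQ : 0 ≤ MQ := (abs_nonneg _).trans hQ
  have hp2 : 0 ≤ ε ^ 2 * p ^ 2 := by positivity
  have hw2 : w ^ 2 ≤ U * w ^ 2 / c₀ := by
    rw [le_div_iff₀ hc₀]; nlinarith [sq_nonneg w]
  have h1 : |4 * U * X| ≤ 2 / ε * √U * (ε ^ 2 * p ^ 2 + U * w ^ 2) := by
    -- AM-GM: `2 ε √U w p ≤ ε² p² + U w²`
    have amgm : 2 * (ε * p) * (√U * w) ≤ ε ^ 2 * p ^ 2 + U * w ^ 2 := by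
      nlinarith [sq_nonneg (ε * p - √U * w)]
    calc |4 * U * X| = 4 * U * |X| := by rw [abs_mul, abs_of_pos (by positivity)]
      _ ≤ 4 * U * (w * p) := by gcongr
      _ = 2 / ε * √U * (2 * (ε * p) * (√U * w)) := by field_simp; rw [hσ]; ring
      _ ≤ _ := by gcongr
  have h2 : |2 * ε * Q * X| ≤ MQ * (1 + 1 / c₀) * (ε ^ 2 * p ^ 2 + U * w ^ 2) := by
    calc |2 * ε * Q * X| = 2 * ε * |Q| * |X| := by
          rw [abs_mul, abs_mul, abs_of_pos (by positivity : (0 : ℝ) < 2 * ε)]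
      _ ≤ MQ * (2 * (ε * p) * w) := by
          nlinarith [mul_le_mul hQ hX (abs_nonneg _) hMQ, abs_nonneg Q]
      _ ≤ MQ * (ε ^ 2 * p ^ 2 + w ^ 2) := by gcongr; nlinarith [sq_nonneg (ε * p - w)]
      _ ≤ MQ * ((1 + 1 / c₀) * (ε ^ 2 * p ^ 2 + U * w ^ 2)) := by
          gcongr
          have : 0 ≤ ε ^ 2 * p ^ 2 / c₀ := by positivity
          have : 0 ≤ U * w ^ 2 := by positivity
          have : (1 + 1 / c₀) * (ε ^ 2 * p ^ 2 + U * w ^ 2) =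
              ε ^ 2 * p ^ 2 + U * w ^ 2 + ε ^ 2 * p ^ 2 / c₀ + U * w ^ 2 / c₀ := by ring
          linarith
      _ = _ := by ring
  have h3 : |2 * ε ^ 2 * ρ * p ^ 2| ≤ 2 * Mρ * (ε ^ 2 * p ^ 2 + U * w ^ 2) := by
    rw [abs_mul, abs_mul, abs_of_nonneg (by positivity : (0 : ℝ) ≤ 2 * ε ^ 2), abs_sq]
    nlinarith [mul_le_mul_of_nonneg_left hρ hp2, mul_nonneg ((abs_nonneg _).trans hρ)
      (mul_nonneg hU0.le (sq_nonneg w))]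
  have h4 : |W * w ^ 2| ≤ MW / c₀ * (ε ^ 2 * p ^ 2 + U * w ^ 2) := by
    have hMW : 0 ≤ MW := (abs_nonneg _).trans hW
    rw [abs_mul, abs_sq]
    calc |W| * w ^ 2 ≤ MW * (U * w ^ 2 / c₀) := by gcongr
      _ ≤ _ := by rw [mul_div_assoc', div_mul_eq_mul_div]; gcongr; linarith
  rw [abs_le] at h1 h2 h3 h4 ⊢
  constructor <;> linarith

theorem stmt14_general (a b : ℝ) (ε μ r₀ c₀ : ℝ)
    (hε : 0 < ε) (hr₀ : 0 < r₀) (hc₀ : 0 < c₀)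
    (R R' V V' q : ℝ → ℝ) (φ φ' φ'' : ℝ → ℂ)
    (hR' : ContinuousOn R' (Set.Icc a b))
    (hRpos : ∀ z ∈ Set.Icc a b, r₀ ≤ R z)
    (hV : ∀ z ∈ Set.Icc a b, HasDerivWithinAt V (V' z) (Set.Icc a b) z)
    (hV' : ContinuousOn V' (Set.Icc a b))
    (hVμ : ∀ z ∈ Set.Icc a b, c₀ ≤ V z - μ)
    (hq : ContinuousOn q (Set.Icc a b))
    (hφ : ∀ z ∈ Set.Icc a b, HasDerivWithinAt φ (φ' z) (Set.Icc a b) z)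
    (hφ' : ∀ z ∈ Set.Icc a b, HasDerivWithinAt φ' (φ'' z) (Set.Icc a b) z)
    (hode : ∀ z ∈ Set.Icc a b,
      -(ε:ℂ)^2 * (((R' z : ℂ) * φ' z + (R z : ℂ) * φ'' z) / (R z : ℂ))
        + ((V z : ℂ) + (ε:ℂ) * (q z : ℂ)) * φ z = (μ:ℂ) * φ z) :
    ∀ s ∈ Set.Icc a b, ∀ t ∈ Set.Icc a b,
      ε^2 * ‖φ' t‖^2 + (V t - μ) * ‖φ t‖^2 ≤
        (ε^2 * ‖φ' s‖^2 + (V s - μ) * ‖φ s‖^2) *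
          Real.exp ((2/ε) * |∫ z in s..t, Real.sqrt (V z - μ)| +
            (sSup ((fun z => |V' z|) '' Set.Icc a b) / c₀
              + 2 * sSup ((fun z => |R' z|) '' Set.Icc a b) / r₀
              + sSup ((fun z => |q z|) '' Set.Icc a b) * (1 + 1/c₀)) * |t - s|) := by
  set MV := sSup ((fun z => |V' z|) '' Icc a b)
  set MR := sSup ((fun z => |R' z|) '' Icc a b)
  set Mq := sSup ((fun z => |q z|) '' Icc a b)
  set C₀ := MV / c₀ + 2 * MR / r₀ + Mq * (1 + 1 / c₀)
  have hC₀ : 0 ≤ C₀ := by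
    have := sSup_image_abs_nonneg V' (Icc a b)
    have := sSup_image_abs_nonneg R' (Icc a b)
    have := sSup_image_abs_nonneg q (Icc a b)
    positivity
  have hVc : ContinuousOn V (Icc a b) := fun z hz => (hV z hz).continuousWithinAt
  have hsqrt : ContinuousOn (fun z => √(V z - μ)) (Icc a b) := (hVc.sub continuousOn_const).sqrt
  have hρ : ∀ z ∈ Icc a b, |R' z / R z| ≤ MR / r₀ := fun z hz => by
    rw [abs_div, abs_of_pos (hr₀.trans_le (hRpos z hz))]
    exact div_le_div₀ (sSup_image_abs_nonneg R' _) (abs_le_sSup_image_abs isCompact_Icc hR' hz)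
      hr₀ (hRpos z hz)
  intro s hs t ht
  have key := le_mul_exp_abs_integral_of_abs_deriv_le (g := fun z => 2 / ε * √(V z - μ) + C₀)
    ((continuousOn_const.mul hsqrt).add continuousOn_const)
    (fun z _ => add_nonneg (mul_nonneg (div_nonneg zero_le_two hε.le) (sqrt_nonneg _)) hC₀)
    (fun z hz => hasDerivWithinAt_semiclassicalEnergy (hV z hz) (hφ z hz) (hφ' z hz)
      (sq_smul_eq_of_eigen_equation (hr₀.trans_le (hRpos z hz)).ne' (hode z hz)))
    (fun z hz => by
      have h := abs_energy_deriv_le hε hc₀ (hVμ z hz) (abs_real_inner_le_norm (φ z) (φ' z))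
        (abs_le_sSup_image_abs isCompact_Icc hq hz) (hρ z hz)
        (abs_le_sSup_image_abs isCompact_Icc hV' hz)
      rwa [← mul_div_assoc 2 MR r₀] at h) hs ht
  rwa [abs_integral_const_mul_add_const (div_nonneg zero_le_two hε.le) hC₀
    (hsqrt.mono (uIcc_subset_Icc hs ht)).intervalIntegrable fun z _ => sqrt_nonneg _] at key

/-- Lemma 4.7 (GronwallAgmon, single-solution form): for an eigenfunction `φ` of the
1D semiclassical operator `-ε² R⁻¹(Rφ')' + (V + εq)φ = μφ` on `[a,b]`, below the
potential, the energy density `E⁺ = ε²|φ'|² + (V-μ)|φ|²` satisfies a Grönwall-type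
bound with rate `(2/ε)` times the Agmon distance, up to an explicit factor. -/
theorem stmt14 (a b : ℝ) (hab : a < b) (ε μ r₀ c₀ : ℝ)
    (hε : 0 < ε) (hr₀ : 0 < r₀) (hc₀ : 0 < c₀)
    (R R' V V' q : ℝ → ℝ) (φ φ' φ'' : ℝ → ℂ)
    (hR : ∀ z ∈ Set.Icc a b, HasDerivWithinAt R (R' z) (Set.Icc a b) z)
    (hR' : ContinuousOn R' (Set.Icc a b))
    (hRpos : ∀ z ∈ Set.Icc a b, r₀ ≤ R z)
    (hV : ∀ z ∈ Set.Icc a b, HasDerivWithinAt V (V' z) (Set.Icc a b) z)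
    (hV' : ContinuousOn V' (Set.Icc a b))
    (hVμ : ∀ z ∈ Set.Icc a b, c₀ ≤ V z - μ)
    (hq : ContinuousOn q (Set.Icc a b))
    (hφ : ∀ z ∈ Set.Icc a b, HasDerivWithinAt φ (φ' z) (Set.Icc a b) z)
    (hφ' : ∀ z ∈ Set.Icc a b, HasDerivWithinAt φ' (φ'' z) (Set.Icc a b) z)
    (hφ'' : ContinuousOn φ'' (Set.Icc a b))
    (hode : ∀ z ∈ Set.Icc a b,
      -(ε:ℂ)^2 * (((R' z : ℂ) * φ' z + (R z : ℂ) * φ'' z) / (R z : ℂ))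
        + ((V z : ℂ) + (ε:ℂ) * (q z : ℂ)) * φ z = (μ:ℂ) * φ z) :
    ∀ s ∈ Set.Icc a b, ∀ t ∈ Set.Icc a b,
      ε^2 * ‖φ' t‖^2 + (V t - μ) * ‖φ t‖^2 ≤
        (ε^2 * ‖φ' s‖^2 + (V s - μ) * ‖φ s‖^2) *
          Real.exp ((2/ε) * |∫ z in s..t, Real.sqrt (V z - μ)| +
            (sSup ((fun z => |V' z|) '' Set.Icc a b) / c₀
              + 2 * sSup ((fun z => |R' z|) '' Set.Icc a b) / r₀
              + sSup ((fun z => |q z|) '' Set.Icc a b) * (1 + 1/c₀)) * |t - s|) :=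
  stmt14_general a b ε μ r₀ c₀ hε hr₀ hc₀ R R' V V' q φ φ' φ'' hR' hRpos hV hV' hVμ hq hφ hφ' hode
end

section
/- Let a < b be real numbers, μ ∈ ℝ, r₀ > 0, 0 < c₀ ≤ C₁. Let R : [a,b] → ℝ be C¹ with R(z) ≥ r₀ for all z; let V : [a,b] → ℝ be C¹ with c₀ ≤ V(z) − μ + 1 ≤ C₁ for all z; and let q : [a,b] → ℝ be continuous. Then there exists D > 0, depending only on r₀, c₀, C₁, sup|R'|, sup|V'| and sup|q|, such that for every ε ∈ (0,1] and every C² function φ : [a,b] → ℂ satisfying −ε² (R(z) φ'(z))'/R(z) + (V(z) + ε q(z)) φ(z) = μ φ(z) on [a,b], the energy E(z) := ε² |φ'(z)|² + (V(z) − μ + 1) |φ(z)|² satisfies E(s) ≤ exp( (D/ε) |s − t| ) · E(t) for all s, t ∈ [a,b]. -/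
/-!
Differentiating the energy `E = ε²‖φ'‖² + (V - μ + 1)‖φ‖²` and eliminating `φ''` with the
equation gives `E' = 2(2(V - μ + 1) - 1 + εq)⟪φ, φ'⟫ - 2ε²(R'/R)‖φ'‖² + V'‖φ‖²`. Since
`2ε|⟪φ, φ'⟫| ≤ ε²‖φ'‖² + ‖φ‖²` and `‖φ‖² ≤ E / c₀`, this yields `|E'| ≤ (D/ε) E` with `D`
built from `C₁`, `1/c₀`, `sup|R'|/r₀`, `sup|V'|` and `sup|q|`. The estimate in each direction is
then the monotonicity of `exp(±(D/ε) x) E(x)`.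
-/

open Set Real

lemma le_exp_mul_sub_mul_of_neg_mul_le_deriv {f f' : ℝ → ℝ} {K a b : ℝ}
    (hf : ∀ x ∈ Icc a b, HasDerivWithinAt f (f' x) (Icc a b) x)
    (hK : ∀ x ∈ Icc a b, -(K * f x) ≤ f' x) {s t : ℝ} (hs : s ∈ Icc a b) (ht : t ∈ Icc a b)
    (hst : s ≤ t) :
    f s ≤ exp (K * (t - s)) * f t := by
  have hg : ∀ x ∈ Icc a b, HasDerivWithinAt (fun x => exp (K * x) * f x)
      (exp (K * x) * (K * f x + f' x)) (Icc a b) x := fun x hx =>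
    (((hasDerivAt_id' x).const_mul K).exp.hasDerivWithinAt.mul (hf x hx)).congr_deriv (by ring)
  have hmono : MonotoneOn (fun x => exp (K * x) * f x) (Icc a b) := by
    refine monotoneOn_of_hasDerivWithinAt_nonneg (convex_Icc a b)
      (fun x hx => (hg x hx).continuousWithinAt)
      (fun x hx => (hg x (interior_subset hx)).mono interior_subset) fun x hx => ?_
    have : 0 ≤ K * f x + f' x := by linarith [hK x (interior_subset hx)]
    positivity
  calc f s = exp (-(K * s)) * (exp (K * s) * f s) := by rw [← mul_assoc, ← exp_add]; simp
    _ ≤ exp (-(K * s)) * (exp (K * t) * f t) := by gcongr ?_ * ?_; exact hmono hs ht hst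
    _ = exp (K * (t - s)) * f t := by rw [← mul_assoc, ← exp_add]; ring_nf

lemma le_exp_mul_abs_sub_mul_of_abs_deriv_le {f f' : ℝ → ℝ} {K a b : ℝ}
    (hf : ∀ x ∈ Icc a b, HasDerivWithinAt f (f' x) (Icc a b) x)
    (hK : ∀ x ∈ Icc a b, |f' x| ≤ K * f x) {s t : ℝ} (hs : s ∈ Icc a b) (ht : t ∈ Icc a b) :
    f s ≤ exp (K * |s - t|) * f t := by
  rcases le_total s t with hst | hts
  · rw [abs_sub_comm, abs_of_nonneg (sub_nonneg.2 hst)]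
    exact le_exp_mul_sub_mul_of_neg_mul_le_deriv hf
      (fun x hx => neg_le_of_abs_le (hK x hx)) hs ht hst
  · have := le_exp_mul_sub_mul_of_neg_mul_le_deriv (f := fun x => -f x) (K := -K)
      (fun x hx => (hf x hx).neg) (fun x hx => by linarith [le_abs_self (f' x), hK x hx])
      ht hs hts
    rw [abs_of_nonneg (sub_nonneg.2 hts)]
    calc f s = exp (K * (s - t)) * (exp (-K * (s - t)) * f s) := by
          rw [← mul_assoc, ← exp_add]; ring_nf; simp
      _ ≤ exp (K * (s - t)) * f t := by gcongr; linarith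

lemma sq_mul_inner_eq_of_eigen_eq {ε μ ρ r v w : ℝ} {u u' u'' : ℂ} (hr : r ≠ 0)
    (h : -(ε : ℂ) ^ 2 * (((ρ : ℂ) * u' + (r : ℂ) * u'') / (r : ℂ)) + ((v : ℂ) + (ε : ℂ) * (w : ℂ)) * u
      = (μ : ℂ) * u) :
    ε ^ 2 * inner ℝ u' u'' = (v - μ + ε * w) * inner ℝ u' u - ε ^ 2 * (ρ / r) * ‖u'‖ ^ 2 := by
  have hsmul : (ε ^ 2) • u'' = (v - μ + ε * w) • u - (ε ^ 2 * (ρ / r)) • u' := by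
    simp only [Complex.real_smul]
    have hr' : (r : ℂ) ≠ 0 := by exact_mod_cast hr
    field_simp at h
    push_cast
    field_simp
    linear_combination -h
  have := congrArg (inner ℝ u') hsmul
  rwa [inner_smul_right, inner_sub_right, inner_smul_right, inner_smul_right,
    real_inner_self_eq_norm_sq] at this

lemma hasDerivWithinAt_energy {φ φ' : ℝ → ℂ} {W : ℝ → ℝ} {ψ ψ' : ℂ} {W' ε z : ℝ} {s : Set ℝ}
    (hφ : HasDerivWithinAt φ ψ s z) (hφ' : HasDerivWithinAt φ' ψ' s z)
    (hW : HasDerivWithinAt W W' s z) :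
    HasDerivWithinAt (fun z => ε ^ 2 * ‖φ' z‖ ^ 2 + W z * ‖φ z‖ ^ 2)
      (ε ^ 2 * (2 * inner ℝ (φ' z) ψ') + (W' * ‖φ z‖ ^ 2 + W z * (2 * inner ℝ (φ z) ψ))) s z :=
  (hφ'.norm_sq.const_mul _).add (hW.mul hφ.norm_sq)

lemma abs_energy_deriv_le_s15 {ε c₀ C₁ MQ β MV W q ρ V' x y p : ℝ} (hε : 0 < ε) (hε1 : ε ≤ 1)
    (hc₀ : 0 < c₀) (hW : c₀ ≤ W) (hWC : W ≤ C₁) (hq : |q| ≤ MQ) (hρ : |ρ| ≤ β)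
    (hV' : |V'| ≤ MV) (hp : |p| ≤ x * y) :
    |2 * (2 * W - 1 + ε * q) * p - 2 * ε ^ 2 * ρ * y ^ 2 + V' * x ^ 2|
      ≤ ((2 * C₁ + 1 + MQ) * (1 + c₀⁻¹) + 2 * β + MV * c₀⁻¹) / ε
          * (ε ^ 2 * y ^ 2 + W * x ^ 2) := by
  set E := ε ^ 2 * y ^ 2 + W * x ^ 2
  have hy : ε ^ 2 * y ^ 2 ≤ E := le_add_of_nonneg_right (by nlinarith [sq_nonneg x])
  have hx : x ^ 2 ≤ c₀⁻¹ * E := by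
    rw [← div_eq_inv_mul, le_div_iff₀ hc₀]
    nlinarith [sq_nonneg x, sq_nonneg (ε * y)]
  have hcoef : |2 * W - 1 + ε * q| ≤ 2 * C₁ + 1 + MQ := by
    have : |ε * q| ≤ MQ := by
      rw [abs_mul, abs_of_pos hε]; nlinarith [abs_nonneg q]
    rw [abs_le] at this ⊢; constructor <;> linarith
  -- AM-GM: `2 ε x y ≤ ε² y² + x²`
  have hcross : ε * |2 * p| ≤ (1 + c₀⁻¹) * E := by
    rw [abs_mul, abs_two]
    nlinarith [sq_nonneg (ε * y - x), mul_le_mul_of_nonneg_left hp hε.le]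
  have hρterm : ε * |2 * ε ^ 2 * ρ * y ^ 2| ≤ 2 * β * E := by
    rw [show 2 * ε ^ 2 * ρ * y ^ 2 = 2 * ρ * (ε ^ 2 * y ^ 2) by ring, abs_mul, abs_mul, abs_two,
      abs_of_nonneg (by positivity : 0 ≤ ε ^ 2 * y ^ 2)]
    have hY : 0 ≤ ε ^ 2 * y ^ 2 := by positivity
    have hβ : 0 ≤ β := (abs_nonneg ρ).trans hρ
    nlinarith [mul_nonneg (sub_nonneg.2 hε1) (mul_nonneg (abs_nonneg ρ) hY),
      mul_nonneg (sub_nonneg.2 hρ) hY, mul_nonneg hβ (sub_nonneg.2 hy)]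
  have hVterm : ε * |V' * x ^ 2| ≤ MV * c₀⁻¹ * E := by
    rw [abs_mul, abs_of_nonneg (sq_nonneg x)]
    have hMV : 0 ≤ MV := (abs_nonneg V').trans hV'
    nlinarith [mul_nonneg (sub_nonneg.2 hε1) (mul_nonneg (abs_nonneg V') (sq_nonneg x)),
      mul_nonneg (sub_nonneg.2 hV') (sq_nonneg x), mul_nonneg hMV (sub_nonneg.2 hx)]
  rw [div_mul_eq_mul_div, le_div_iff₀ hε]
  calc |2 * (2 * W - 1 + ε * q) * p - 2 * ε ^ 2 * ρ * y ^ 2 + V' * x ^ 2| * ε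
      ≤ |2 * W - 1 + ε * q| * (ε * |2 * p|) + ε * |2 * ε ^ 2 * ρ * y ^ 2|
          + ε * |V' * x ^ 2| := by
        have htri : |2 * (2 * W - 1 + ε * q) * p - 2 * ε ^ 2 * ρ * y ^ 2 + V' * x ^ 2|
            ≤ |2 * W - 1 + ε * q| * |2 * p| + |2 * ε ^ 2 * ρ * y ^ 2| + |V' * x ^ 2| := by
          rw [← abs_mul, show 2 * (2 * W - 1 + ε * q) * p = (2 * W - 1 + ε * q) * (2 * p) by ring]
          exact (abs_add_le _ _).trans (add_le_add_left (abs_sub _ _) _)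
        nlinarith [mul_le_mul_of_nonneg_right htri hε.le]
    _ ≤ _ := by
        have := mul_le_mul hcoef hcross (by positivity) ((abs_nonneg _).trans hcoef)
        linarith

theorem stmt15_general (a b : ℝ) (μ r₀ c₀ C₁ : ℝ)
    (hr₀ : 0 < r₀) (hc₀ : 0 < c₀) (hc₀C₁ : c₀ ≤ C₁)
    (R R' V V' q : ℝ → ℝ)
    (hR' : ContinuousOn R' (Set.Icc a b))
    (hRpos : ∀ z ∈ Set.Icc a b, r₀ ≤ R z)
    (hV : ∀ z ∈ Set.Icc a b, HasDerivWithinAt V (V' z) (Set.Icc a b) z)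
    (hV' : ContinuousOn V' (Set.Icc a b))
    (hVbnd : ∀ z ∈ Set.Icc a b, c₀ ≤ V z - μ + 1 ∧ V z - μ + 1 ≤ C₁)
    (hq : ContinuousOn q (Set.Icc a b)) :
    ∃ D > 0, ∀ ε ∈ Set.Ioc (0:ℝ) 1, ∀ φ φ' φ'' : ℝ → ℂ,
      (∀ z ∈ Set.Icc a b, HasDerivWithinAt φ (φ' z) (Set.Icc a b) z) →
      (∀ z ∈ Set.Icc a b, HasDerivWithinAt φ' (φ'' z) (Set.Icc a b) z) →
      ContinuousOn φ'' (Set.Icc a b) →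
      (∀ z ∈ Set.Icc a b,
        -(ε:ℂ)^2 * (((R' z : ℂ) * φ' z + (R z : ℂ) * φ'' z) / (R z : ℂ))
          + ((V z : ℂ) + (ε:ℂ) * (q z : ℂ)) * φ z = (μ:ℂ) * φ z) →
      ∀ s ∈ Set.Icc a b, ∀ t ∈ Set.Icc a b,
        ε^2 * ‖φ' s‖^2 + (V s - μ + 1) * ‖φ s‖^2 ≤
          Real.exp ((D/ε) * |s - t|) *
            (ε^2 * ‖φ' t‖^2 + (V t - μ + 1) * ‖φ t‖^2) := by
  have bound : ∀ f : ℝ → ℝ, ContinuousOn f (Icc a b) → ∃ M > 0, ∀ z ∈ Icc a b, |f z| ≤ M :=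
    fun f hf => (isCompact_Icc.image_of_continuousOn hf).isBounded.exists_pos_norm_le.imp
      fun _ ⟨hM, h⟩ => ⟨hM, fun z hz => h _ (mem_image_of_mem f hz)⟩
  obtain ⟨MR, hMR0, hMR⟩ := bound R' hR'
  obtain ⟨MV, hMV0, hMV⟩ := bound V' hV'
  obtain ⟨MQ, hMQ0, hMQ⟩ := bound q hq
  have hD : 0 < (2 * C₁ + 1 + MQ) * (1 + c₀⁻¹) + 2 * (MR / r₀) + MV * c₀⁻¹ := by
    have : 0 < 2 * C₁ + 1 + MQ := by linarith
    positivity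
  refine ⟨_, hD, ?_⟩
  rintro ε ⟨hε, hε1⟩ φ φ' φ'' hφ hφ' - hODE s hs t ht
  refine le_exp_mul_abs_sub_mul_of_abs_deriv_le (fun z hz => hasDerivWithinAt_energy (hφ z hz)
    (hφ' z hz) (((hV z hz).sub_const μ).add_const 1)) (fun z hz => ?_) hs ht
  have hRz : 0 < R z := hr₀.trans_le (hRpos z hz)
  have hρ : |R' z / R z| ≤ MR / r₀ := by
    rw [abs_div, abs_of_pos hRz]
    exact div_le_div₀ hMR0.le (hMR z hz) hr₀ (hRpos z hz)
  have hODE' := sq_mul_inner_eq_of_eigen_eq hRz.ne' (hODE z hz)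
  convert abs_energy_deriv_le_s15 hε hε1 hc₀ (hVbnd z hz).1 (hVbnd z hz).2 (hMQ z hz) hρ (hMV z hz)
    (abs_real_inner_le_norm (φ z) (φ' z)) using 2
  rw [real_inner_comm (φ z)] at hODE'
  linear_combination 2 * hODE'

/-- Lemma 4.8 (Gronwallgene, single-solution form): a rough Grönwall estimate
`E(s) ≤ exp((D/ε)|s - t|) E(t)` for the energy density
`E = ε²|φ'|² + (V - μ + 1)|φ|²` of eigenfunctions of the 1D semiclassical
operator, valid across the potential minimum, with `D` independent of `ε ∈ (0,1]`
and of the eigenfunction. -/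
theorem stmt15 (a b : ℝ) (hab : a < b) (μ r₀ c₀ C₁ : ℝ)
    (hr₀ : 0 < r₀) (hc₀ : 0 < c₀) (hc₀C₁ : c₀ ≤ C₁)
    (R R' V V' q : ℝ → ℝ)
    (hR : ∀ z ∈ Set.Icc a b, HasDerivWithinAt R (R' z) (Set.Icc a b) z)
    (hR' : ContinuousOn R' (Set.Icc a b))
    (hRpos : ∀ z ∈ Set.Icc a b, r₀ ≤ R z)
    (hV : ∀ z ∈ Set.Icc a b, HasDerivWithinAt V (V' z) (Set.Icc a b) z)
    (hV' : ContinuousOn V' (Set.Icc a b))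
    (hVbnd : ∀ z ∈ Set.Icc a b, c₀ ≤ V z - μ + 1 ∧ V z - μ + 1 ≤ C₁)
    (hq : ContinuousOn q (Set.Icc a b)) :
    ∃ D > 0, ∀ ε ∈ Set.Ioc (0:ℝ) 1, ∀ φ φ' φ'' : ℝ → ℂ,
      (∀ z ∈ Set.Icc a b, HasDerivWithinAt φ (φ' z) (Set.Icc a b) z) →
      (∀ z ∈ Set.Icc a b, HasDerivWithinAt φ' (φ'' z) (Set.Icc a b) z) →
      ContinuousOn φ'' (Set.Icc a b) →
      (∀ z ∈ Set.Icc a b,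
        -(ε:ℂ)^2 * (((R' z : ℂ) * φ' z + (R z : ℂ) * φ'' z) / (R z : ℂ))
          + ((V z : ℂ) + (ε:ℂ) * (q z : ℂ)) * φ z = (μ:ℂ) * φ z) →
      ∀ s ∈ Set.Icc a b, ∀ t ∈ Set.Icc a b,
        ε^2 * ‖φ' s‖^2 + (V s - μ + 1) * ‖φ s‖^2 ≤
          Real.exp ((D/ε) * |s - t|) *
            (ε^2 * ‖φ' t‖^2 + (V t - μ + 1) * ‖φ t‖^2) :=
  stmt15_general a b μ r₀ c₀ C₁ hr₀ hc₀ hc₀C₁ R R' V V' q hR' hRpos hV hV' hVbnd hq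
end
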